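/- arXiv:1602.01151 — 8 statements merged into one kernel-verified Lean document; each statement's English description precedes it below -/
import Mathlib

section
/- Let M = x_0^{a_0} x_1^{a_1} ⋯ x_n^{a_n} be a monomial with 0 < a_0 ≤ a_1 ≤ ⋯ ≤ a_n and total degree d = a_0 + ⋯ + a_n. Then the real Waring rank of M satisfies rk_ℝ(M) ≤ (1/(2a_0)) · ∏_{i=0}^{n} (a_i + a_0). -/
/-!
For each `i ≥ 1` choose `a i + a 0` real nodes `t i k` and weights `w i k` with
`∑ k, w i k * t i k ^ j = δ (j, a i)` for all `j ≤ a i + a 0`: this is the `a i`-th coefficient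
functional computed by Lagrange interpolation, once the nodes are chosen so that the `a i`-th
coefficient of their nodal polynomial vanishes. Summing
`(∏ i, w i (k i)) • (x 0 + ∑ i, t i (k i) • x i) ^ d` over the grid of all `k` kills every
monomial `x ^ b` with `b ≠ a`: some `b i` with `i ≥ 1` then differs from `a i` and is at most
`a i + a 0`, for otherwise `b 1 + ⋯ + b n` would exceed `d`. What is left is
`multinomial a • x ^ a`, written as a combination of `∏ i ≥ 1, (a i + a 0)` powers.
-/

open MvPolynomial

/-- The Waring rank over `K` of a form `F` of degree `d`: the least number `s` of terms
in a decomposition `F = ∑ c_i L_i^d` with `c_i ∈ K` and `L_i` linear forms. -/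
noncomputable def waringRank (K : Type*) [Field K] {n : ℕ} (d : ℕ)
    (F : MvPolynomial (Fin n) K) : ℕ :=
  sInf {s | ∃ (c : Fin s → K) (L : Fin s → Fin n → K),
    F = ∑ i, C (c i) * (∑ j, C (L i j) * X j) ^ d}

open Finset

namespace Polynomial

theorem _root_.Lagrange.sum_coeff_basis_mul_eval {K ι : Type*} [Field K] [DecidableEq ι]
    {s : Finset ι} {v : ι → K} (hvs : Set.InjOn v s) {f : K[X]} (hf : f.degree < #s) (m : ℕ) :
    ∑ i ∈ s, (Lagrange.basis s v i).coeff m * f.eval (v i) = f.coeff m := by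
  conv_rhs => rw [Lagrange.eq_interpolate hvs hf]
  simp [Lagrange.interpolate_apply, finsetSum_coeff, mul_comm]

variable {K : Type*} [Field K] [LinearOrder K] [IsStrictOrderedRing K]

theorem _root_.Lagrange.exists_injective_coeff_nodal_eq_zero {m N : ℕ} (hm : m < N) :
    ∃ t : Fin N → K, Function.Injective t ∧ (Lagrange.nodal univ t).coeff m = 0 := by
  obtain ⟨N, rfl⟩ : ∃ N', N = N' + 1 := ⟨N - 1, by omega⟩
  set Q : K[X] := ∏ k : Fin N, (X + C ((k : K) + 1))
  have hQ_pos : ∀ j ≤ N, 0 < Q.coeff j := fun j hj => by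
    rw [Finset.prod_X_add_C_coeff _ _ (by simpa using hj)]
    exact sum_pos (fun s _ => prod_pos fun k _ => by positivity)
      (powersetCard_nonempty.2 (by simp))
  have hXQ : 0 ≤ (X * Q).coeff m := by
    cases m with
    | zero => simp
    | succ m => rw [coeff_X_mul]; exact (hQ_pos m (by omega)).le
  -- The extra root `u` cancels the `m`-th coefficient of `(X - C u) * Q`; as `u ≥ 0`, it differs
  -- from the negative roots of `Q`.
  set u := (X * Q).coeff m / Q.coeff m
  have hu : 0 ≤ u := div_nonneg hXQ (hQ_pos m (by omega)).le
  refine ⟨Fin.cons u fun k => -((k : K) + 1), Fin.cons_injective_iff.2 ⟨?_, ?_⟩, ?_⟩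
  · rintro ⟨k, hk⟩
    have : (0 : K) < (k : K) + 1 := by positivity
    linarith
  · intro k l hkl
    exact Fin.ext (by exact_mod_cast add_left_injective 1 (neg_injective hkl))
  · rw [Lagrange.nodal_eq, Fin.prod_univ_succ]
    simp only [Fin.cons_zero, Fin.cons_succ, map_neg, sub_neg_eq_add]
    rw [sub_mul, coeff_sub, coeff_C_mul, div_mul_cancel₀ _ (hQ_pos m (by omega)).ne', sub_self]

theorem _root_.exists_weighted_power_sum_eq_ite {m N : ℕ} (hm : m < N) :
    ∃ t w : Fin N → K, ∀ j ≤ N, ∑ k, w k * t k ^ j = if j = m then 1 else 0 := by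
  obtain ⟨t, ht, hcoeff⟩ := Lagrange.exists_injective_coeff_nodal_eq_zero (K := K) hm
  refine ⟨t, fun k => (Lagrange.basis univ t k).coeff m, fun j hj => ?_⟩
  obtain hj | rfl := hj.lt_or_eq
  · simpa [coeff_X_pow, eq_comm] using
      Lagrange.sum_coeff_basis_mul_eval ht.injOn (f := X ^ j) (by simpa using hj) m
  · -- `X ^ j - nodal` has degree `< j` and agrees with `X ^ j` at the nodes.
    have hdeg := degree_sub_lt_left (p := X ^ j) (q := Lagrange.nodal univ t)
      (by simp [Lagrange.degree_nodal]) (pow_ne_zero j X_ne_zero)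
      (by simp [Lagrange.nodal_monic.leadingCoeff])
    have := Lagrange.sum_coeff_basis_mul_eval ht.injOn (s := univ) (by simpa using hdeg) m
    simp only [eval_sub, eval_pow, eval_X, Lagrange.eval_nodal_at_node (mem_univ _), sub_zero,
      coeff_sub, coeff_X_pow, hcoeff, if_neg hm.ne] at this
    rw [this, if_neg hm.ne']

end Polynomial

theorem exists_succ_ne_and_le_of_sum_eq {n : ℕ} {a b : Fin (n + 1) → ℕ}
    (hsum : ∑ i, b i = ∑ i, a i) (hne : b ≠ a) :
    ∃ i : Fin n, b i.succ ≠ a i.succ ∧ b i.succ ≤ a i.succ + a 0 := by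
  by_contra! hbig
  have hge (i : Fin n) : a i.succ ≤ b i.succ := by
    by_cases h : b i.succ = a i.succ
    · exact h.ge
    · exact (hbig i h).le.trans' le_self_add
  rw [Fin.sum_univ_succ, Fin.sum_univ_succ] at hsum
  by_cases hsucc : ∀ i : Fin n, b i.succ = a i.succ
  · refine hne (funext fun i => Fin.cases ?_ hsucc i)
    rw [sum_congr rfl fun (i : Fin n) _ => hsucc i] at hsum
    omega
  · obtain ⟨i₀, hi₀⟩ := not_forall.1 hsucc
    have hlt : ∑ i : Fin n, (a i.succ + if i = i₀ then a 0 else 0) < ∑ i : Fin n, b i.succ := by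
      refine sum_lt_sum (fun i _ => ?_) ⟨i₀, mem_univ _, by simpa using hbig i₀ hi₀⟩
      split_ifs with hi
      · exact hi ▸ (hbig i₀ hi₀).le
      · simpa using hge i
    rw [sum_add_distrib, sum_ite_eq', if_pos (mem_univ _)] at hlt
    omega

theorem MvPolynomial.sum_C_mul_linearForm_pow {R ι σ : Type*} [CommSemiring R] [Fintype ι]
    [Fintype σ] [DecidableEq σ] (c : ι → R) (L : ι → σ → R) (d : ℕ) :
    ∑ i, C (c i) * (∑ j, C (L i j) * X j) ^ d =
      ∑ b ∈ piAntidiag univ d, C (Nat.multinomial univ b * ∑ i, c i * ∏ j, L i j ^ b j) *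
        ∏ j, (X j : MvPolynomial σ R) ^ b j := by
  simp only [sum_pow_eq_sum_piAntidiag, mul_pow, prod_mul_distrib, ← map_pow, ← map_prod, mul_sum]
  rw [sum_comm]
  refine sum_congr rfl fun b _ => ?_
  simp only [sum_mul, map_sum, map_mul, map_natCast]
  exact sum_congr rfl fun i _ => by ring

section

variable {R : Type*} [CommSemiring R] {n : ℕ} {κ : Fin n → Type*} [∀ i, Fintype (κ i)]
  {a : Fin (n + 1) → ℕ} (t w : ∀ i, κ i → R)

theorem prod_sum_mul_pow_eq_ite
    (hw : ∀ i, ∀ j ≤ a i.succ + a 0, ∑ k, w i k * t i k ^ j = if j = a i.succ then 1 else 0)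
    {b : Fin (n + 1) → ℕ} (hb : ∑ i, b i = ∑ i, a i) :
    ∏ i, ∑ k, w i k * t i k ^ b i.succ = if b = a then 1 else 0 := by
  split_ifs with h
  · subst h
    exact prod_eq_one fun i _ => by rw [hw i _ le_self_add, if_pos rfl]
  · obtain ⟨i, hne, hle⟩ := exists_succ_ne_and_le_of_sum_eq hb h
    exact prod_eq_zero (mem_univ i) (by rw [hw i _ hle, if_neg hne])

theorem sum_C_prod_mul_linearForm_pow_eq
    (hw : ∀ i, ∀ j ≤ a i.succ + a 0, ∑ k, w i k * t i k ^ j = if j = a i.succ then 1 else 0) :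
    ∑ k : ∀ i, κ i, C (∏ i, w i (k i)) *
        (∑ j, C ((Fin.cons 1 fun i => t i (k i) : Fin (n + 1) → R) j) * X j) ^ (∑ i, a i) =
      C (Nat.multinomial univ a : R) * ∏ i, (X i : MvPolynomial (Fin (n + 1)) R) ^ a i := by
  rw [sum_C_mul_linearForm_pow]
  have hmoment (b) (hb : b ∈ piAntidiag univ (∑ i, a i)) :
      ∑ k : ∀ i, κ i, (∏ i, w i (k i)) *
          ∏ j, (Fin.cons 1 fun i => t i (k i) : Fin (n + 1) → R) j ^ b j =
        if b = a then 1 else 0 := by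
    simp only [Fin.prod_univ_succ, Fin.cons_zero, Fin.cons_succ, one_pow, one_mul,
      ← prod_mul_distrib]
    rw [← prod_sum_mul_pow_eq_ite t w hw (mem_piAntidiag.1 hb).1, Fintype.prod_sum]
  calc _ = ∑ b ∈ piAntidiag univ (∑ i, a i),
        if b = a then C (Nat.multinomial univ b : R) * ∏ j, X j ^ b j else 0 :=
        sum_congr rfl fun b hb => by rw [hmoment b hb]; split_ifs <;> simp
    _ = _ := by rw [sum_ite_eq', if_pos (mem_piAntidiag.2 ⟨rfl, fun i _ => mem_univ i⟩)]

end

theorem waringRank_le_card_of_C_mul_eq {K ι : Type*} [Field K] [Fintype ι] {n d : ℕ}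
    {F : MvPolynomial (Fin n) K} {r : K} (hr : r ≠ 0) (c : ι → K) (L : ι → Fin n → K)
    (hF : C r * F = ∑ i, C (c i) * (∑ j, C (L i j) * X j) ^ d) :
    waringRank K d F ≤ Fintype.card ι := by
  let e := (Fintype.equivFin ι).symm
  refine Nat.sInf_le ⟨fun i => r⁻¹ * c (e i), fun i => L (e i), ?_⟩
  calc F = C r⁻¹ * (C r * F) := by
        rw [← mul_assoc, ← map_mul, inv_mul_cancel₀ hr, map_one, one_mul]
    _ = _ := by
      rw [hF, mul_sum, ← e.sum_comp]
      simp only [map_mul, mul_assoc]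

theorem stmt_4_general (n : ℕ) (a : Fin (n + 1) → ℕ) (h0 : 0 < a 0) :
    2 * a 0 * waringRank ℝ (∑ i, a i) (∏ i, (X i : MvPolynomial (Fin (n + 1)) ℝ) ^ a i)
      ≤ ∏ i, (a i + a 0) := by
  choose t w hw using fun i : Fin n =>
    exists_weighted_power_sum_eq_ite (K := ℝ) (m := a i.succ) (N := a i.succ + a 0) (by omega)
  have hrank : waringRank ℝ (∑ i, a i) (∏ i, (X i : MvPolynomial (Fin (n + 1)) ℝ) ^ a i) ≤
      ∏ i : Fin n, (a i.succ + a 0) := by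
    simpa using waringRank_le_card_of_C_mul_eq
      (by exact_mod_cast (Nat.multinomial_pos _ _).ne') _ _
      (sum_C_prod_mul_linearForm_pow_eq t w hw).symm
  calc 2 * a 0 * waringRank ℝ (∑ i, a i) (∏ i, (X i : MvPolynomial (Fin (n + 1)) ℝ) ^ a i)
      ≤ 2 * a 0 * ∏ i : Fin n, (a i.succ + a 0) := by gcongr
    _ = ∏ i, (a i + a 0) := by rw [Fin.prod_univ_succ]; ring

/-- Upper bound on the real Waring rank of a monomial:
`rk_ℝ(x_0^{a_0}⋯x_n^{a_n}) ≤ (1/(2a_0)) ∏ (a_i + a_0)`, stated multiplicatively. -/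
theorem stmt_4 (n : ℕ) (a : Fin (n + 1) → ℕ) (h0 : 0 < a 0) (hmono : Monotone a) :
    2 * a 0 * waringRank ℝ (∑ i, a i) (∏ i, (X i : MvPolynomial (Fin (n + 1)) ℝ) ^ a i)
      ≤ ∏ i, (a i + a 0) :=
  stmt_4_general n a h0
end

section
/- The real Waring rank of the monomial x_0^2 x_1^2 ⋯ x_n^2 (of degree 2n+2) is at most (3^{n+1} − 1)/2. -/
open MvPolynomial

/-!
The weights `1, -2, 1` at the points `-1, 0, 1` form the second central difference, so the
moment `∑ₐ w(a) aᵏ` vanishes for `k < 2` and equals `2` for `k = 2`. Expanding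
`(∑ᵢ vᵢ xᵢ)^(2m)` by the multinomial theorem and summing over `v ∈ {-1, 0, 1}ᵐ` with weight
`∏ᵢ w(vᵢ)` factors the coefficient of `xᵏ` into a product of moments, which kills every
exponent except `k = (2, …, 2)`: the sum is `(2m)! ∏ᵢ xᵢ²`. The term `v = 0` vanishes and `v`,
`-v` contribute equally, so the `(3ᵐ - 1)/2` lexicographically positive `v` suffice.
-/

open Finset

lemma waringRank_le_card {K ι : Type*} [Field K] {n d : ℕ} {F : MvPolynomial (Fin n) K}
    (s : Finset ι) (c : ι → K) (L : ι → Fin n → K)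
    (h : F = ∑ x ∈ s, C (c x) * (∑ j, C (L x j) * X j) ^ d) :
    waringRank K d F ≤ #s := by
  refine Nat.sInf_le ⟨fun i => c (s.equivFin.symm i), fun i => L (s.equivFin.symm i), ?_⟩
  rw [h, ← s.sum_coe_sort, ← s.equivFin.symm.sum_comp]

theorem sum_piFinset_mul_pow_eq {R σ : Type*} [CommRing R] [Fintype σ] [DecidableEq σ]
    (T : Finset R) (w : R → R) (d : ℕ) :
    ∑ v ∈ Fintype.piFinset fun _ : σ => T, C (∏ i, w (v i)) * (∑ i, C (v i) * X i) ^ d =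
      ∑ k ∈ piAntidiag univ d,
        C (Nat.multinomial univ k * ∏ i, ∑ a ∈ T, w a * a ^ k i) * ∏ i, X i ^ k i := by
  simp_rw [sum_pow_eq_sum_piAntidiag, mul_sum]
  rw [sum_comm]
  refine sum_congr rfl fun k _ => ?_
  rw [prod_univ_sum, mul_sum, map_sum, sum_mul]
  refine sum_congr rfl fun v _ => ?_
  simp only [mul_pow, prod_mul_distrib, map_mul, map_prod, map_pow, map_natCast]
  ring

noncomputable def centralDiffWeight (a : ℝ) : ℝ := if a = 0 then -2 else 1

lemma sum_centralDiffWeight_mul_pow (k : ℕ) :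
    ∑ a ∈ ({-1, 0, 1} : Finset ℝ), centralDiffWeight a * a ^ k = (-1) ^ k - 2 * 0 ^ k + 1 := by
  norm_num [centralDiffWeight]
  ring

lemma two_le_of_sum_centralDiffWeight_mul_pow_ne_zero {k : ℕ}
    (hk : ∑ a ∈ ({-1, 0, 1} : Finset ℝ), centralDiffWeight a * a ^ k ≠ 0) : 2 ≤ k := by
  contrapose! hk
  rw [sum_centralDiffWeight_mul_pow]
  interval_cases k <;> norm_num

noncomputable def ternaryCube (σ : Type*) [Fintype σ] [DecidableEq σ] : Finset (σ → ℝ) :=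
  Fintype.piFinset fun _ => {-1, 0, 1}

theorem sum_ternaryCube_mul_pow_eq (σ : Type*) [Fintype σ] [DecidableEq σ] :
    ∑ v ∈ ternaryCube σ,
        C (∏ i, centralDiffWeight (v i)) * (∑ i, C (v i) * X i) ^ (2 * Fintype.card σ) =
      C ((2 * Fintype.card σ).factorial : ℝ) * ∏ i, X i ^ 2 := by
  rw [ternaryCube, sum_piFinset_mul_pow_eq, sum_eq_single (fun _ => 2)]
  · have hfact : (Nat.multinomial univ fun _ : σ => 2) * 2 ^ Fintype.card σ =
        (2 * Fintype.card σ).factorial := by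
      simpa [mul_comm, Finset.card_univ] using Nat.multinomial_spec (univ : Finset σ) fun _ => 2
    simp only [sum_centralDiffWeight_mul_pow, prod_const, card_univ, ← hfact]
    norm_num
  · intro k hk hk2
    suffices ∏ i, ∑ a ∈ ({-1, 0, 1} : Finset ℝ), centralDiffWeight a * a ^ k i = 0 by simp [this]
    by_contra hne
    have hle : ∀ i ∈ univ, 2 ≤ k i := fun i _ =>
      two_le_of_sum_centralDiffWeight_mul_pow_ne_zero (prod_ne_zero_iff.mp hne i (mem_univ i))
    rw [mem_piAntidiag] at hk
    refine hk2 (funext fun i => ((sum_eq_sum_iff_of_le hle).mp ?_ i (mem_univ i)).symm)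
    simp [hk.1, mul_comm]
  · simp [mem_piAntidiag, mul_comm]

theorem sum_eq_sum_filter_eq_zero_add_two_nsmul {E M : Type*} [AddGroup E] [DecidableEq E]
    [AddCommMonoid M] (P : E → Prop) [DecidablePred P] (hP0 : ¬P 0)
    (hP : ∀ x ≠ 0, P (-x) ↔ ¬P x) (s : Finset E) (hs : ∀ x ∈ s, -x ∈ s)
    (f : E → M) (hf : ∀ x ∈ s, f (-x) = f x) :
    ∑ x ∈ s, f x = ∑ x ∈ s with x = 0, f x + 2 • ∑ x ∈ s with P x, f x := by
  have hneg : ∑ x ∈ s with ¬P x ∧ x ≠ 0, f x = ∑ x ∈ s with P x, f x := by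
    refine sum_nbij' (-·) (-·) ?_ ?_ (by simp) (by simp) (by simp +contextual [hf])
    · simp +contextual [hs, hP]
    · intro x hx
      have hx0 : x ≠ 0 := by rintro rfl; exact hP0 (mem_filter.mp hx).2
      simp_all [hP x hx0]
  have hzero : s.filter (fun x => ¬P x ∧ x = 0) = s.filter (· = 0) :=
    filter_congr fun x _ => by grind
  rw [← sum_filter_add_sum_filter_not s P,
    ← sum_filter_add_sum_filter_not (s.filter (¬P ·)) (· = 0), filter_filter,
    filter_filter, hzero, hneg, two_nsmul]
  abel

lemma pos_toLex_neg_iff {ι : Type*} [LinearOrder ι] [WellFoundedLT ι] {v : ι → ℝ} (hv : v ≠ 0) :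
    0 < toLex (-v) ↔ ¬0 < toLex v := by
  refine (neg_pos (a := toLex v)).trans ⟨fun h h' => lt_asymm h h', fun h => ?_⟩
  rcases lt_trichotomy (toLex v) 0 with hlt | heq | hgt
  · exact hlt
  · exact absurd (congrArg ofLex heq) hv
  · exact absurd hgt h

open Classical in
noncomputable def ternaryHalf (m : ℕ) : Finset (Fin m → ℝ) :=
  (ternaryCube (Fin m)).filter fun v => 0 < toLex v

lemma neg_mem_ternaryCube {σ : Type*} [Fintype σ] [DecidableEq σ] {v : σ → ℝ}
    (hv : v ∈ ternaryCube σ) : -v ∈ ternaryCube σ := by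
  simp only [ternaryCube, Fintype.mem_piFinset, mem_insert, mem_singleton, Pi.neg_apply] at hv ⊢
  grind

lemma filter_eq_zero_ternaryCube (σ : Type*) [Fintype σ] [DecidableEq σ] :
    (ternaryCube σ).filter (· = 0) = {0} := by
  ext v
  simp only [mem_filter, mem_singleton, and_iff_right_iff_imp]
  rintro rfl
  simp [ternaryCube]

open Classical in
lemma sum_ternaryCube_eq_two_nsmul_sum_ternaryHalf {M : Type*} [AddCommMonoid M] (m : ℕ)
    (f : (Fin m → ℝ) → M) (hf : ∀ v, f (-v) = f v) :
    ∑ v ∈ ternaryCube (Fin m), f v = f 0 + 2 • ∑ v ∈ ternaryHalf m, f v := by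
  rw [sum_eq_sum_filter_eq_zero_add_two_nsmul (fun v => 0 < toLex v) (lt_irrefl 0)
    (fun _ => pos_toLex_neg_iff) _ (fun _ => neg_mem_ternaryCube) f (fun v _ => hf v),
    filter_eq_zero_ternaryCube, sum_singleton, ternaryHalf]

lemma card_ternaryHalf (m : ℕ) : #(ternaryHalf m) = (3 ^ m - 1) / 2 := by
  have hcard : #(ternaryCube (Fin m)) = 3 ^ m := by simp [ternaryCube]; norm_num
  have := sum_ternaryCube_eq_two_nsmul_sum_ternaryHalf m (fun _ => 1) (fun _ => rfl)
  simp only [sum_const, smul_eq_mul, mul_one] at this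
  omega

theorem prod_X_sq_eq_sum_ternaryHalf {m : ℕ} (hm : m ≠ 0) :
    ∏ i : Fin m, (X i : MvPolynomial (Fin m) ℝ) ^ 2 =
      ∑ v ∈ ternaryHalf m,
        C (2 / (2 * m).factorial * ∏ i, centralDiffWeight (v i)) *
          (∑ i, C (v i) * X i) ^ (2 * m) := by
  set t : (Fin m → ℝ) → MvPolynomial (Fin m) ℝ := fun v =>
    C (∏ i, centralDiffWeight (v i)) * (∑ i, C (v i) * X i) ^ (2 * m)
  have ht_neg : ∀ v, t (-v) = t v := fun v => by
    simp only [t, Pi.neg_apply, centralDiffWeight, neg_eq_zero, map_neg, neg_mul, sum_neg_distrib,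
      (even_two_mul m).neg_pow]
  have ht_zero : t 0 = 0 := by simp [t, hm]
  have hcube : ∑ v ∈ ternaryCube (Fin m), t v = C ((2 * m).factorial : ℝ) * ∏ i, X i ^ 2 := by
    simpa only [Fintype.card_fin] using sum_ternaryCube_mul_pow_eq (Fin m)
  rw [sum_ternaryCube_eq_two_nsmul_sum_ternaryHalf m t ht_neg, ht_zero, zero_add] at hcube
  have hfact : ((2 * m).factorial : ℝ) ≠ 0 := by positivity
  calc ∏ i : Fin m, (X i : MvPolynomial (Fin m) ℝ) ^ 2
      = C ((2 * m).factorial : ℝ)⁻¹ * (C ((2 * m).factorial : ℝ) * ∏ i, X i ^ 2) := by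
        rw [← mul_assoc, ← C_mul, inv_mul_cancel₀ hfact, C_1, one_mul]
    _ = _ := by
        rw [← hcube, smul_sum, mul_sum]
        refine sum_congr rfl fun v _ => ?_
        simp only [t, div_eq_mul_inv, map_mul, nsmul_eq_mul, map_ofNat]
        ring

/-- `rk_ℝ(x_0^2 x_1^2 ⋯ x_n^2) ≤ (3^{n+1} − 1)/2`. -/
theorem stmt_9 (n : ℕ) :
    waringRank ℝ (2 * n + 2) (∏ i, (X i : MvPolynomial (Fin (n + 1)) ℝ) ^ 2) ≤
      (3 ^ (n + 1) - 1) / 2 := by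
  rw [← card_ternaryHalf]
  exact waringRank_le_card _ _ id (prod_X_sq_eq_sum_ternaryHalf n.succ_ne_zero)
end

section
/- For each i = 1,...,n+1, let R_i = Σ L_P^{2n+2}, where the sum ranges over vectors P = (p_0,...,p_n) ∈ {0,±1}^{n+1} with exactly i nonzero entries, taken up to sign (i.e. over representatives of antipodal pairs), and L_P = p_0 x_0 + ⋯ + p_n x_n. Then ((2n+2)!/2) · x_0^2 x_1^2 ⋯ x_n^2 = Σ_{i=1}^{n+1} (−2)^{n+1−i} R_i. -/
open MvPolynomial



private lemma coord_sum (k : ℕ) (y : ℝ) :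
    ∑ p ∈ ({-1, 0, 1} : Finset ℝ), (if p = 0 then (-2:ℝ) else 1) * (p * y) ^ k
      = ((-1:ℝ) ^ k + 1 + (-2) * 0 ^ k) * y ^ k := by
  have h1 : ((-1:ℝ)) ∉ ({0, 1} : Finset ℝ) := by norm_num
  have h2 : (0:ℝ) ∉ ({1} : Finset ℝ) := by norm_num
  rw [show ({-1, 0, 1} : Finset ℝ) = insert (-1) (insert 0 {1}) from rfl,
    Finset.sum_insert h1, Finset.sum_insert h2, Finset.sum_singleton]
  simp only [mul_pow, if_pos rfl]
  norm_num
  ring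

private lemma g_zero {k : ℕ} (h : k = 0 ∨ Odd k) : ((-1:ℝ) ^ k + 1 + (-2) * 0 ^ k) = 0 := by
  rcases h with h | h
  · subst h; norm_num
  · rw [h.neg_one_pow, zero_pow (by rcases h with ⟨m, rfl⟩; omega)]
    ring

private lemma key (n : ℕ) (x : Fin (n+1) → ℝ) :
    ∑ P ∈ Fintype.piFinset (fun _ : Fin (n+1) => ({-1, 0, 1} : Finset ℝ)),
      (∏ j, (if P j = 0 then (-2:ℝ) else 1)) * (∑ j, P j * x j) ^ (2*n+2)
    = (Nat.factorial (2*n+2) : ℝ) * ∏ j, x j ^ 2 := by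
  have expand : ∀ P : Fin (n+1) → ℝ, (∑ j, P j * x j) ^ (2*n+2)
      = ∑ k ∈ Finset.piAntidiag Finset.univ (2*n+2),
          (Nat.multinomial Finset.univ k : ℝ) * ∏ j, (P j * x j) ^ k j := fun P =>
    Finset.sum_pow_eq_sum_piAntidiag _ _ _
  simp_rw [expand, Finset.mul_sum]
  rw [Finset.sum_comm]
  have step : ∀ k ∈ Finset.piAntidiag (Finset.univ : Finset (Fin (n+1))) (2*n+2),
      ∑ P ∈ Fintype.piFinset (fun _ : Fin (n+1) => ({-1, 0, 1} : Finset ℝ)),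
        (∏ j, (if P j = 0 then (-2:ℝ) else 1)) *
          ((Nat.multinomial Finset.univ k : ℝ) * ∏ j, (P j * x j) ^ k j)
      = (Nat.multinomial Finset.univ k : ℝ) *
          ∏ j, (((-1:ℝ) ^ k j + 1 + (-2) * 0 ^ k j) * x j ^ k j) := by
    intro k _
    have : ∀ P : Fin (n+1) → ℝ,
        (∏ j, (if P j = 0 then (-2:ℝ) else 1)) *
          ((Nat.multinomial Finset.univ k : ℝ) * ∏ j, (P j * x j) ^ k j)
        = (Nat.multinomial Finset.univ k : ℝ) *
            ∏ j, ((if P j = 0 then (-2:ℝ) else 1) * (P j * x j) ^ k j) := by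
      intro P; rw [Finset.prod_mul_distrib]; ring
    simp_rw [this, ← Finset.mul_sum]
    congr 1
    calc ∑ P ∈ Fintype.piFinset (fun _ : Fin (n+1) => ({-1, 0, 1} : Finset ℝ)),
          ∏ j, ((if P j = 0 then (-2:ℝ) else 1) * (P j * x j) ^ k j)
        = ∏ j, ∑ p ∈ ({-1, 0, 1} : Finset ℝ), ((if p = 0 then (-2:ℝ) else 1) * (p * x j) ^ k j) :=
          (Finset.prod_univ_sum (fun _ : Fin (n+1) => ({-1, 0, 1} : Finset ℝ))
            (fun j p => (if p = 0 then (-2:ℝ) else 1) * (p * x j) ^ k j)).symm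
      _ = _ := Finset.prod_congr rfl fun j _ => coord_sum (k j) (x j)
  rw [Finset.sum_congr rfl step]
  rw [Finset.sum_eq_single_of_mem (fun _ => 2)]
  · have hg : ((-1:ℝ) ^ 2 + 1 + (-2) * 0 ^ 2) = 2 := by norm_num
    simp_rw [hg]
    rw [Finset.prod_mul_distrib, Finset.prod_const]
    have hm : (2:ℕ) ^ (n+1) * Nat.multinomial (Finset.univ : Finset (Fin (n+1))) (fun _ => 2)
        = Nat.factorial (2*n+2) := by
      have hspec := Nat.multinomial_spec (Finset.univ : Finset (Fin (n+1))) (fun _ => 2)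
      rw [Finset.prod_const, Finset.sum_const, Finset.card_univ, Fintype.card_fin,
        smul_eq_mul] at hspec
      rw [show (n+1) * 2 = 2*n+2 by ring] at hspec
      rw [← hspec]; norm_num [Nat.factorial]
    have hmr : ((2:ℝ)) ^ (n+1) * (Nat.multinomial (Finset.univ : Finset (Fin (n+1))) (fun _ => 2) : ℝ)
        = (Nat.factorial (2*n+2) : ℝ) := by exact_mod_cast hm
    rw [Finset.card_univ, Fintype.card_fin, ← hmr]
    ring
  · simp only [Finset.mem_piAntidiag]
    constructor
    · rw [Finset.sum_const, Finset.card_univ, Fintype.card_fin, smul_eq_mul]; omega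
    · intro i _; exact Finset.mem_univ i
  · intro k hk hne
    have hkd := (Finset.mem_piAntidiag.mp hk).1
    by_cases hz : ∀ j, k j ≠ 0 ∧ Even (k j)
    · exfalso
      apply hne
      have h2le : ∀ j ∈ (Finset.univ : Finset (Fin (n+1))), 2 ≤ k j := by
        intro j _
        obtain ⟨h0, he⟩ := hz j
        obtain ⟨m, hm⟩ := he
        omega
      have hsum : ∑ j : Fin (n+1), (2:ℕ) = ∑ j, k j := by
        rw [hkd, Finset.sum_const, Finset.card_univ, Fintype.card_fin, smul_eq_mul]; omega
      have := (Finset.sum_eq_sum_iff_of_le h2le).mp hsum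
      funext j
      exact (this j (Finset.mem_univ j)).symm
    · push_neg at hz
      obtain ⟨j, hj⟩ := hz
      have : ((-1:ℝ) ^ k j + 1 + (-2) * 0 ^ k j) = 0 := by
        apply g_zero
        by_cases h0 : k j = 0
        · exact Or.inl h0
        · exact Or.inr (Nat.odd_iff.mpr (Nat.not_even_iff.mp (hj h0)))
      rw [Finset.prod_eq_zero (Finset.mem_univ j) (by rw [this, zero_mul]), mul_zero]


/-- The identity `((2n+2)!/2)·x_0^2⋯x_n^2 = ∑_{i=1}^{n+1} (−2)^{n+1−i} R_i`, where
`R_i = (1/2) ∑ L_P^{2n+2}`, the sum over all `P ∈ {0,±1}^{n+1}` with exactly `i`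
nonzero entries, and `L_P = p_0 x_0 + ⋯ + p_n x_n`. -/
theorem stmt_10 (n : ℕ) :
    C ((Nat.factorial (2 * n + 2) : ℝ) / 2) *
        ∏ j, (X j : MvPolynomial (Fin (n + 1)) ℝ) ^ 2 =
      ∑ i ∈ Finset.Icc 1 (n + 1), C ((-2 : ℝ) ^ (n + 1 - i)) *
        ((2 : ℝ)⁻¹ •
          ∑ P ∈ (Fintype.piFinset fun _ : Fin (n + 1) => ({-1, 0, 1} : Finset ℝ)).filter
              (fun P => (Finset.univ.filter fun j => P j ≠ 0).card = i),
            (∑ j, C (P j) * X j) ^ (2 * n + 2)) := by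
  apply MvPolynomial.funext
  intro x
  simp only [map_mul, map_sum, map_pow, map_prod, eval_C, eval_X, smul_eval]
  set s := Fintype.piFinset (fun _ : Fin (n + 1) => ({-1, 0, 1} : Finset ℝ)) with hs
  set F : (Fin (n + 1) → ℝ) → ℝ := fun P => (∑ j, P j * x j) ^ (2 * n + 2) with hF
  set w : (Fin (n + 1) → ℝ) → ℝ := fun P => ∏ j, (if P j = 0 then (-2:ℝ) else 1) with hw
  set cnt : (Fin (n + 1) → ℝ) → ℕ := fun P => (Finset.univ.filter fun j => P j ≠ 0).card
    with hcnt
  have step1 : ∀ i ∈ Finset.Icc 1 (n + 1),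
      (-2:ℝ) ^ (n + 1 - i) * ((2:ℝ)⁻¹ * ∑ P ∈ s.filter (fun P => cnt P = i), F P)
        = (2:ℝ)⁻¹ * ∑ P ∈ s.filter (fun P => cnt P = i), w P * F P := by
    intro i hi
    rw [Finset.mul_sum, Finset.mul_sum, Finset.mul_sum]
    refine Finset.sum_congr rfl fun P hP => ?_
    have hPi : cnt P = i := (Finset.mem_filter.mp hP).2
    have hile : i ≤ n + 1 := (Finset.mem_Icc.mp hi).2
    have hcard : (Finset.univ.filter fun j => P j = 0).card = n + 1 - i := by
      have h := Finset.card_filter_add_card_filter_not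
        (s := (Finset.univ : Finset (Fin (n + 1)))) (p := fun j => P j ≠ 0)
      simp only [not_not] at h
      rw [Finset.card_univ, Fintype.card_fin] at h
      simp only [hcnt] at hPi
      omega
    have hwP : w P = (-2:ℝ) ^ (n + 1 - i) := by
      simp only [hw]
      rw [Finset.prod_ite (fun _ => (-2:ℝ)) (fun _ => (1:ℝ))]
      simp only [Finset.prod_const, Finset.prod_const_one, one_pow, mul_one]
      rw [hcard]
    rw [hwP]; ring
  rw [Finset.sum_congr rfl step1, ← Finset.mul_sum]
  have hset : ∀ i ∈ Finset.Icc 1 (n + 1),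
      (∑ P ∈ s.filter (fun P => cnt P = i), w P * F P)
        = ∑ P ∈ (s.filter (fun P => cnt P ≠ 0)).filter (fun P => cnt P = i), w P * F P := by
    intro i hi
    rw [Finset.filter_filter]
    refine (Finset.sum_congr ?_ fun _ _ => rfl)
    refine Finset.filter_congr fun P _ => ?_
    have h1 : 1 ≤ i := (Finset.mem_Icc.mp hi).1
    constructor
    · intro h; exact ⟨by omega, h⟩
    · intro h; exact h.2
  rw [Finset.sum_congr rfl hset]
  have hmaps : ∀ P ∈ s.filter (fun P => cnt P ≠ 0), cnt P ∈ Finset.Icc 1 (n + 1) := by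
    intro P hP
    have h1 : cnt P ≠ 0 := (Finset.mem_filter.mp hP).2
    have h2 : cnt P ≤ n + 1 := by
      simp only [hcnt]
      exact (Finset.card_filter_le _ _).trans (by rw [Finset.card_univ, Fintype.card_fin])
    rw [Finset.mem_Icc]; omega
  rw [Finset.sum_fiberwise_of_maps_to hmaps (fun P => w P * F P)]
  have hzero : ∑ P ∈ s.filter (fun P => ¬ cnt P ≠ 0), w P * F P = 0 := by
    refine Finset.sum_eq_zero fun P hP => ?_
    have h0 : cnt P = 0 := by
      have := (Finset.mem_filter.mp hP).2; omega
    have hall : ∀ j, P j = 0 := by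
      intro j
      simp only [hcnt] at h0
      have := Finset.card_eq_zero.mp h0
      by_contra hj
      exact absurd (this ▸ Finset.mem_filter.mpr ⟨Finset.mem_univ j, hj⟩)
        (Finset.notMem_empty j)
    have : F P = 0 := by
      simp only [hF]
      simp only [hall, zero_mul, Finset.sum_const_zero]
      exact zero_pow (by omega)
    rw [this, mul_zero]
  have htot : ∑ P ∈ s.filter (fun P => cnt P ≠ 0), w P * F P = ∑ P ∈ s, w P * F P := by
    rw [← Finset.sum_filter_add_sum_filter_not s (fun P => cnt P ≠ 0) (fun P => w P * F P),
      hzero, add_zero]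
  rw [htot]
  have := key n x
  simp only [hs, hw, hF]
  rw [this]
  ring
end

section
/- Let a_1, ..., a_n ≥ 1 and for each i let p_{i,1}, ..., p_{i,a_i+1} be distinct real numbers with Σ_{j=1}^{a_i+1} p_{i,j} = 0. Set G_i = ∏_{j=1}^{a_i+1}(X_i − p_{i,j} X_0). Then each G_i lies in the perp ideal of M = x_0 x_1^{a_1} ⋯ x_n^{a_n}, i.e. G_i annihilates M under the differentiation action. -/
open MvPolynomial

/-- The action of the dual ring by differentiation: `X_i ↦ ∂/∂x_i`. -/
noncomputable def diffOp {n : ℕ} (P F : MvPolynomial (Fin n) ℝ) : MvPolynomial (Fin n) ℝ :=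
  ∑ b ∈ P.support, P.coeff b •
    ((List.ofFn fun i : Fin n =>
      ((pderiv i).toLinearMap : Module.End ℝ (MvPolynomial (Fin n) ℝ)) ^ b i).prod F)

/-- The operator corresponding to a single exponent vector. -/
noncomputable def opOf {n : ℕ} (b : Fin n →₀ ℕ) : Module.End ℝ (MvPolynomial (Fin n) ℝ) :=
  (List.ofFn fun i : Fin n =>
    ((pderiv i).toLinearMap : Module.End ℝ (MvPolynomial (Fin n) ℝ)) ^ b i).prod

lemma diffOp_eq {n : ℕ} (P F : MvPolynomial (Fin n) ℝ) :
    diffOp P F = ∑ b ∈ P.support, P.coeff b • opOf b F := rfl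

lemma diffOp_monomial {n : ℕ} (b : Fin n →₀ ℕ) (c : ℝ) (F : MvPolynomial (Fin n) ℝ) :
    diffOp (monomial b c) F = c • opOf b F := by
  rcases eq_or_ne c 0 with rfl | hc
  · simp [diffOp_eq]
  · rw [diffOp_eq, support_monomial, if_neg hc, Finset.sum_singleton, coeff_monomial,
      if_pos rfl]

lemma diffOp_add {n : ℕ} (P Q F : MvPolynomial (Fin n) ℝ) :
    diffOp (P + Q) F = diffOp P F + diffOp Q F := by
  classical
  have h : ∀ (R : MvPolynomial (Fin n) ℝ) (s : Finset (Fin n →₀ ℕ)), R.support ⊆ s →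
      diffOp R F = ∑ b ∈ s, R.coeff b • opOf b F := fun R s hs =>
    Finset.sum_subset hs fun b _ hb => by rw [notMem_support_iff.mp hb, zero_smul]
  set s := (P + Q).support ∪ P.support ∪ Q.support with hs
  rw [h (P + Q) s (Finset.subset_union_left.trans Finset.subset_union_left),
    h P s ((Finset.subset_union_right).trans Finset.subset_union_left),
    h Q s Finset.subset_union_right, ← Finset.sum_add_distrib]
  exact Finset.sum_congr rfl fun b _ => by rw [coeff_add, add_smul]

lemma diffOp_zero {n : ℕ} (F : MvPolynomial (Fin n) ℝ) : diffOp 0 F = 0 := by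
  simp [diffOp_eq]

lemma diffOp_sum {n : ℕ} {ι : Type*} (s : Finset ι) (f : ι → MvPolynomial (Fin n) ℝ)
    (F : MvPolynomial (Fin n) ℝ) :
    diffOp (∑ t ∈ s, f t) F = ∑ t ∈ s, diffOp (f t) F := by
  classical
  induction s using Finset.cons_induction with
  | empty => simp [diffOp_zero]
  | cons t s hts ih => rw [Finset.sum_cons, diffOp_add, ih, Finset.sum_cons]

lemma listProd_eq_single {M : Type*} [Monoid M] :
    ∀ {m : ℕ} (g : Fin m → M) (j : Fin m), (∀ l, l ≠ j → g l = 1) →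
      (List.ofFn g).prod = g j
  | 0, _, j, _ => j.elim0
  | m + 1, g, j, h => by
    rw [List.ofFn_succ, List.prod_cons]
    rcases eq_or_ne j 0 with rfl | hj
    · have h1 : (List.ofFn fun l : Fin m => g l.succ).prod = 1 := by
        apply List.prod_eq_one
        intro x hx
        simp only [List.mem_ofFn] at hx
        obtain ⟨l, rfl⟩ := hx
        exact h _ (Fin.succ_ne_zero l)
      rw [h1, mul_one]
    · obtain ⟨j', rfl⟩ := Fin.exists_succ_eq_of_ne_zero hj
      rw [h 0 (Fin.succ_ne_zero j').symm, one_mul]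
      exact listProd_eq_single (fun l : Fin m => g l.succ) j'
        fun l hl => h l.succ fun e => hl (Fin.succ_injective _ e)

lemma listProd_eq_pair {M : Type*} [Monoid M] {m : ℕ} (g : Fin (m + 1) → M)
    (j : Fin (m + 1)) (hj : j ≠ 0) (h : ∀ l, l ≠ 0 → l ≠ j → g l = 1) :
    (List.ofFn g).prod = g 0 * g j := by
  rw [List.ofFn_succ, List.prod_cons]
  congr 1
  obtain ⟨j', rfl⟩ := Fin.exists_succ_eq_of_ne_zero hj
  exact listProd_eq_single (fun l : Fin m => g l.succ) j'
    fun l hl => h l.succ (Fin.succ_ne_zero l) fun e => hl (Fin.succ_injective _ e)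

lemma pderiv_pow_monomial {n : ℕ} (l : Fin n) (m : ℕ) (d : Fin n →₀ ℕ) (c : ℝ) :
    (((pderiv l).toLinearMap : Module.End ℝ (MvPolynomial (Fin n) ℝ)) ^ m) (monomial d c)
      = monomial (d - Finsupp.single l m) (c * (d l).descFactorial m) := by
  induction m generalizing d c with
  | zero => simp
  | succ m ih =>
    rw [pow_succ, Module.End.mul_apply, Derivation.coeFn_coe, pderiv_monomial, ih]
    have he : d - Finsupp.single l 1 - Finsupp.single l m = d - Finsupp.single l (m + 1) := by
      rw [tsub_tsub, ← Finsupp.single_add, add_comm]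
    have hc : ((d - Finsupp.single l 1 : Fin n →₀ ℕ)) l = d l - 1 := by
      rw [Finsupp.tsub_apply, Finsupp.single_eq_same]
    rw [he, hc]
    congr 1
    rw [mul_assoc]
    congr 1
    cases hdl : d l with
    | zero => simp
    | succ k =>
      rw [Nat.succ_descFactorial_succ]
      push_cast
      ring

/-- Let `M = x_0 x_1^{a_1} ⋯ x_n^{a_n}`.  For `i ≠ 0`, if `p_{i,1},…,p_{i,a_i+1}` are
distinct reals summing to zero, then `G_i = ∏_j (X_i − p_{i,j} X_0)` lies in `M^⊥`. -/
theorem stmt_14 (n : ℕ) (a : Fin (n + 1) → ℕ) (h0 : a 0 = 1) (ha : ∀ i, 0 < a i)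
    (p : (i : Fin (n + 1)) → Fin (a i + 1) → ℝ)
    (hinj : ∀ i, Function.Injective (p i)) (hsum : ∀ i, ∑ j, p i j = 0)
    (i : Fin (n + 1)) (hi : i ≠ 0) :
    diffOp (∏ j, ((X i : MvPolynomial (Fin (n + 1)) ℝ) - C (p i j) * X 0))
      (∏ k, (X k : MvPolynomial (Fin (n + 1)) ℝ) ^ a k) = 0 := by
  classical
  set d : Fin (n + 1) →₀ ℕ := Finsupp.equivFunOnFinite.symm a with hd
  have hda : ∀ k, d k = a k := fun k => rfl
  have hdsupp : d.support = Finset.univ := by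
    ext k
    simp [Finsupp.mem_support_iff, hda, (ha k).ne']
  have hM : (∏ k, (X k : MvPolynomial (Fin (n + 1)) ℝ) ^ a k) = monomial d 1 := by
    rw [← prod_X_pow_eq_monomial, hdsupp]
    rfl
  -- expand the product as a sum of monomials over subsets
  have hexp : (∏ j, ((X i : MvPolynomial (Fin (n + 1)) ℝ) - C (p i j) * X 0)) =
      ∑ t ∈ (Finset.univ : Finset (Fin (a i + 1))).powerset,
        monomial (Finsupp.single (0 : Fin (n + 1)) t.card +
            Finsupp.single i (a i + 1 - t.card))
          (∏ j ∈ t, -(p i j)) := by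
    have hterm : ∀ j : Fin (a i + 1),
        (X i : MvPolynomial (Fin (n + 1)) ℝ) - C (p i j) * X 0
          = C (-(p i j)) * X 0 + X i := by
      intro j; rw [map_neg]; ring
    rw [Finset.prod_congr rfl fun j _ => hterm j, Finset.prod_add]
    refine Finset.sum_congr rfl fun t ht => ?_
    have hcard : (Finset.univ \ t).card = a i + 1 - t.card := by
      rw [Finset.card_sdiff_of_subset (Finset.subset_univ t), Finset.card_univ, Fintype.card_fin]
    rw [Finset.prod_mul_distrib, ← map_prod, Finset.prod_const, Finset.prod_const, hcard,
      X_pow_eq_monomial, X_pow_eq_monomial, C_apply, monomial_mul, monomial_mul, zero_add,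
      mul_one, mul_one]
  -- the operator of a two-variable exponent vector applied to the monomial `d`
  have hop : ∀ k m : ℕ,
      opOf (Finsupp.single (0 : Fin (n + 1)) k + Finsupp.single i m) (monomial d (1 : ℝ))
        = monomial (d - Finsupp.single i m - Finsupp.single (0 : Fin (n + 1)) k)
            ((((a i).descFactorial m : ℝ)) * ((Nat.descFactorial 1 k : ℕ) : ℝ)) := by
    intro k m
    set b := Finsupp.single (0 : Fin (n + 1)) k + Finsupp.single i m with hb
    have hb0 : b 0 = k := by
      simp [hb, Finsupp.add_apply, Finsupp.single_apply, hi, Ne.symm hi]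
    have hbi : b i = m := by
      simp [hb, Finsupp.add_apply, Finsupp.single_apply, hi, Ne.symm hi]
    have hprod : opOf b = ((pderiv (0 : Fin (n + 1))).toLinearMap :
          Module.End ℝ (MvPolynomial (Fin (n + 1)) ℝ)) ^ k *
        ((pderiv i).toLinearMap : Module.End ℝ (MvPolynomial (Fin (n + 1)) ℝ)) ^ m := by
      unfold opOf
      rw [listProd_eq_pair _ i hi
        (fun l hl0 hli => by
          have : b l = 0 := by
            simp [hb, Finsupp.single_apply, Ne.symm hl0, Ne.symm hli]
          rw [this, pow_zero]), hb0, hbi]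
    rw [hprod, Module.End.mul_apply, pderiv_pow_monomial, pderiv_pow_monomial, one_mul]
    have h1 : ((d - Finsupp.single i m : Fin (n + 1) →₀ ℕ)) 0 = 1 := by
      rw [Finsupp.tsub_apply, Finsupp.single_apply, if_neg hi, hda 0, h0]
      rfl
    rw [h1, hda i]
  rw [hM, hexp, diffOp_sum]
  -- split the sum according to whether `t.card = 1`
  rw [← Finset.sum_filter_add_sum_filter_not _ (fun t => t.card = 1)]
  have hzero : (∑ t ∈ (Finset.univ : Finset (Fin (a i + 1))).powerset.filter
      (fun t => ¬ t.card = 1),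
        diffOp (monomial (Finsupp.single (0 : Fin (n + 1)) t.card +
            Finsupp.single i (a i + 1 - t.card)) (∏ j ∈ t, -(p i j)))
          (monomial d 1)) = 0 := by
    refine Finset.sum_eq_zero fun t ht => ?_
    obtain ⟨-, htc⟩ := Finset.mem_filter.mp ht
    rw [diffOp_monomial, hop]
    rcases Nat.lt_or_ge t.card 1 with h1 | h1
    · -- t.card = 0, so the `i`-derivative order is `a i + 1 > a i`
      interval_cases h : t.card
      · rw [Nat.sub_zero, Nat.descFactorial_eq_zero_iff_lt.mpr (Nat.lt_succ_self _)]
        simp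
    · have h2 : 1 < t.card := lt_of_le_of_ne h1 (Ne.symm htc)
      rw [Nat.descFactorial_eq_zero_iff_lt.mpr h2]
      simp
  rw [hzero, add_zero, ← Finset.powersetCard_eq_filter, Finset.powersetCard_one,
    Finset.sum_map]
  simp only [Function.Embedding.coeFn_mk, Finset.card_singleton, Finset.prod_singleton,
    Nat.add_sub_cancel]
  simp only [diffOp_monomial]
  rw [← Finset.sum_smul]
  have hzs : (∑ j : Fin (a i + 1), -(p i j)) = 0 := by
    rw [Finset.sum_neg_distrib, hsum i, neg_zero]
  rw [hzs, zero_smul]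
end

section
/- Let a_0 ≥ 2 and a_1 ≥ a_0. Any real binary form G(X_0, X_i) of degree a_0 + a_i in which the coefficient of X_0^{a_0} X_i^{a_i} vanishes and whose leading terms in X_0 and X_i have the shape G = X_0^{a_0+1} g(X_0,X_i) + X_i^{a_i+1} h(X_0,X_i) with deg g = a_i − 1, deg h = a_0 − 1 can be chosen (for suitable g, h with h monic) so that G has a_0 + a_i distinct real roots. -/
open Polynomial Finset

/-- product ∏ (X - (-q^{i+1})) -/
noncomputable def Pq (q : ℝ) (n : ℕ) : Polynomial ℝ :=
  ∏ i ∈ Finset.range n, (X - C (-(q ^ (i + 1))))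

/-- exponent sum k+1 + ... + n -/
def Ee (n k : ℕ) : ℕ := ∑ i ∈ Finset.Ico k n, (i + 1)

lemma Pq_succ (q : ℝ) (n : ℕ) : Pq q (n+1) = Pq q n * (X - C (-(q ^ (n+1)))) :=
  Finset.prod_range_succ _ _

lemma Pq_monic (q : ℝ) (n : ℕ) : (Pq q n).Monic :=
  monic_prod_of_monic _ _ fun _ _ => monic_X_sub_C _

lemma Pq_natDegree (q : ℝ) (n : ℕ) : (Pq q n).natDegree = n := by
  rw [Pq, natDegree_prod_of_monic _ _ fun _ _ => monic_X_sub_C _]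
  simp only [natDegree_X_sub_C, Finset.sum_const, Finset.card_range, smul_eq_mul, mul_one]

lemma Ee_succ (n k : ℕ) (h : k ≤ n) : Ee (n+1) k = Ee n k + (n+1) := by
  rw [Ee, Ee, Finset.sum_Ico_succ_top h]

lemma Ee_step (n k : ℕ) (h : k < n) : Ee n k = Ee n (k+1) + (k+1) := by
  rw [Ee, Ee, Finset.sum_eq_sum_Ico_succ_bot h]; exact Nat.add_comm _ _

lemma Ee_self (n : ℕ) : Ee n n = 0 := by simp [Ee]

lemma Pq_coeff_pos_aux (q : ℝ) (hq : 1 ≤ q) (n : ℕ) : ∀ k, k ≤ n →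
    q ^ (Ee n k) ≤ (Pq q n).coeff k ∧ (Pq q n).coeff k ≤ 2 ^ n * q ^ (Ee n k) := by
  have hq0 : (0:ℝ) < q := lt_of_lt_of_le one_pos hq
  induction n with
  | zero =>
    intro k hk
    interval_cases k
    simp [Pq, Ee]
  | succ n ih =>
    intro k hk
    have hsplit : Pq q (n+1) = Pq q n * X + C (q ^ (n+1)) * Pq q n := by
      rw [Pq_succ, map_neg]; ring
    have hco : (Pq q (n+1)).coeff k
        = (Pq q n * X).coeff k + q ^ (n+1) * (Pq q n).coeff k := by
      rw [hsplit, coeff_add, coeff_C_mul]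
    have hqp : (0:ℝ) < q ^ (n+1) := pow_pos hq0 _
    have h2p : (0:ℝ) < 2 ^ n := by positivity
    match k with
    | 0 =>
      have hx : (Pq q n * X).coeff 0 = 0 := by simp [mul_coeff_zero]
      have hE : Ee (n+1) 0 = Ee n 0 + (n+1) := Ee_succ n 0 (Nat.zero_le n)
      obtain ⟨hl, hu⟩ := ih 0 (Nat.zero_le n)
      rw [hco, hx, zero_add, hE, pow_add]
      constructor
      · calc q ^ Ee n 0 * q ^ (n+1) ≤ (Pq q n).coeff 0 * q ^ (n+1) :=
              mul_le_mul_of_nonneg_right hl (le_of_lt hqp)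
          _ = q ^ (n+1) * (Pq q n).coeff 0 := mul_comm _ _
      · calc q ^ (n+1) * (Pq q n).coeff 0 ≤ q ^ (n+1) * (2 ^ n * q ^ Ee n 0) :=
              mul_le_mul_of_nonneg_left hu (le_of_lt hqp)
          _ = 2 ^ n * (q ^ Ee n 0 * q ^ (n+1)) := by ring
          _ ≤ 2 ^ (n+1) * (q ^ Ee n 0 * q ^ (n+1)) := by
              have : (2:ℝ) ^ n ≤ 2 ^ (n+1) := by
                apply pow_le_pow_right₀ (by norm_num) (Nat.le_succ n)
              exact mul_le_mul_of_nonneg_right this (by positivity)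
    | (j+1) =>
      have hx : (Pq q n * X).coeff (j+1) = (Pq q n).coeff j := coeff_mul_X _ _
      rw [hco, hx]
      rcases Nat.lt_or_ge (j+1) (n+1) with hlt | hge
      · -- j+1 ≤ n
        have hj1 : j + 1 ≤ n := Nat.lt_succ_iff.mp hlt
        have hj : j ≤ n := le_trans (Nat.le_succ j) hj1
        obtain ⟨hl1, hu1⟩ := ih j hj
        obtain ⟨hl2, hu2⟩ := ih (j+1) hj1
        have hE : Ee (n+1) (j+1) = Ee n (j+1) + (n+1) := Ee_succ n (j+1) hj1
        rw [hE, pow_add]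
        have hcj : (0:ℝ) < (Pq q n).coeff j := lt_of_lt_of_le (pow_pos hq0 _) hl1
        constructor
        · calc q ^ Ee n (j+1) * q ^ (n+1) ≤ (Pq q n).coeff (j+1) * q ^ (n+1) :=
                mul_le_mul_of_nonneg_right hl2 (le_of_lt hqp)
            _ = q ^ (n+1) * (Pq q n).coeff (j+1) := mul_comm _ _
            _ ≤ (Pq q n).coeff j + q ^ (n+1) * (Pq q n).coeff (j+1) := by linarith
        · have hmono : q ^ (Ee n j) ≤ q ^ Ee n (j+1) * q ^ (n+1) := by
            rw [← pow_add]
            apply pow_le_pow_right₀ hq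
            have := Ee_step n j hj1
            omega
          have h1 : (Pq q n).coeff j ≤ 2 ^ n * (q ^ Ee n (j+1) * q ^ (n+1)) := by
            calc (Pq q n).coeff j ≤ 2 ^ n * q ^ (Ee n j) := hu1
              _ ≤ 2 ^ n * (q ^ Ee n (j+1) * q ^ (n+1)) :=
                  mul_le_mul_of_nonneg_left hmono (le_of_lt h2p)
          have h2 : q ^ (n+1) * (Pq q n).coeff (j+1) ≤ 2 ^ n * (q ^ Ee n (j+1) * q ^ (n+1)) := by
            calc q ^ (n+1) * (Pq q n).coeff (j+1) ≤ q ^ (n+1) * (2 ^ n * q ^ Ee n (j+1)) :=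
                mul_le_mul_of_nonneg_left hu2 (le_of_lt hqp)
              _ = 2 ^ n * (q ^ Ee n (j+1) * q ^ (n+1)) := by ring
          calc (Pq q n).coeff j + q ^ (n+1) * (Pq q n).coeff (j+1)
              ≤ 2 ^ n * (q ^ Ee n (j+1) * q ^ (n+1)) + 2 ^ n * (q ^ Ee n (j+1) * q ^ (n+1)) := by
                linarith
            _ = 2 ^ (n+1) * (q ^ Ee n (j+1) * q ^ (n+1)) := by ring
      · -- j = n
        have hj : n = j := by omega
        subst hj
        have h1 : (Pq q n).coeff n = 1 := by
          have := (Pq_monic q n).coeff_natDegree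
          rwa [Pq_natDegree] at this
        have h2 : (Pq q n).coeff (n+1) = 0 := by
          apply coeff_eq_zero_of_natDegree_lt
          rw [Pq_natDegree]; omega
        rw [h1, h2, Ee_self, mul_zero, add_zero, pow_zero, mul_one]
        refine ⟨le_refl _, ?_⟩
        exact one_le_pow₀ (by norm_num : (1:ℝ) ≤ 2)

lemma Pq_roots (q : ℝ) (n : ℕ) :
    (Pq q n).roots = (Finset.range n).val.map (fun i => -(q ^ (i + 1))) := by
  conv_rhs => rw [← roots_multiset_prod_X_sub_C ((Finset.range n).val.map (fun i => -(q ^ (i + 1))))]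
  rw [Pq, Finset.prod_eq_multiset_prod, Multiset.map_map]
  rfl


/-- For `2 ≤ a₀ ≤ a₁`, there exist real polynomials `g` (of degree `a₁ − 1`) and `h`
(monic of degree `a₀ − 1`) such that the dehomogenization `F = g + t^{a₁+1}·h` of the
binary form `G = X₀^{a₀+1} g(X₀,X₁) + X₁^{a₁+1} h(X₀,X₁)` (in which the coefficient of
`X₀^{a₀} X₁^{a₁}` vanishes) has `a₀ + a₁` distinct real roots. -/
theorem stmt_15 (a₀ a₁ : ℕ) (h₀ : 2 ≤ a₀) (h₁ : a₀ ≤ a₁) :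
    ∃ g h : Polynomial ℝ, h.Monic ∧ h.natDegree = a₀ - 1 ∧ g.natDegree = a₁ - 1 ∧
      ((g + Polynomial.X ^ (a₁ + 1) * h).roots.card = a₀ + a₁ ∧
        (g + Polynomial.X ^ (a₁ + 1) * h).roots.Nodup) := by
  obtain ⟨b, rfl⟩ : ∃ b, a₁ = b + 2 := ⟨a₁ - 2, by omega⟩
  set n : ℕ := a₀ + (b + 2) - 1 with hn
  have hbn : b + 2 ≤ n := by omega
  set q : ℝ := 4 ^ n + 1 with hqdef
  have hq4 : (4:ℝ) ^ n < q := by simp [hqdef]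
  have hq : (1:ℝ) < q := by
    have : (1:ℝ) ≤ 4 ^ n := one_le_pow₀ (by norm_num)
    rw [hqdef]; linarith
  have hq1 : (1:ℝ) ≤ q := le_of_lt hq
  set P : Polynomial ℝ := Pq q n with hP
  have hbd := Pq_coeff_pos_aux q hq1 n
  have hcpos : ∀ k, k ≤ n → 0 < P.coeff k := fun k hk =>
    lt_of_lt_of_le (pow_pos (by linarith) _) (hbd k hk).1
  -- key inequality
  have hkey : P.coeff b * P.coeff (b + 2) < P.coeff (b + 1) ^ 2 := by
    have hEb : Ee n b = Ee n (b + 1) + (b + 1) := Ee_step n b (by omega)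
    have hEb1 : Ee n (b + 1) = Ee n (b + 2) + (b + 2) := Ee_step n (b + 1) (by omega)
    have h1 : P.coeff b * P.coeff (b + 2) ≤ 4 ^ n * q ^ (Ee n b + Ee n (b + 2)) := by
      have hb1 := (hbd b (by omega)).2
      have hb2 := (hbd (b + 2) (by omega)).2
      have hp1 : (0:ℝ) ≤ P.coeff b := le_of_lt (hcpos b (by omega))
      calc P.coeff b * P.coeff (b + 2) ≤ (2 ^ n * q ^ Ee n b) * (2 ^ n * q ^ Ee n (b + 2)) := by
            apply mul_le_mul hb1 hb2 (le_of_lt (hcpos (b+2) (by omega))) (by positivity)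
        _ = 4 ^ n * q ^ (Ee n b + Ee n (b + 2)) := by
            rw [pow_add]; rw [show (4:ℝ) ^ n = 2 ^ n * 2 ^ n by rw [← mul_pow]; norm_num]; ring
    have h2 : q ^ (Ee n b + Ee n (b + 2) + 1) ≤ P.coeff (b + 1) ^ 2 := by
      have hb1 := (hbd (b + 1) (by omega)).1
      calc q ^ (Ee n b + Ee n (b + 2) + 1) = q ^ Ee n (b + 1) * q ^ Ee n (b + 1) := by
            rw [← pow_add]; congr 1; omega
        _ ≤ P.coeff (b + 1) * P.coeff (b + 1) := by
            apply mul_le_mul hb1 hb1 (by positivity) (le_of_lt (hcpos (b+1) (by omega)))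
        _ = P.coeff (b + 1) ^ 2 := (sq _).symm
    have h3 : (4:ℝ) ^ n * q ^ (Ee n b + Ee n (b + 2)) < q ^ (Ee n b + Ee n (b + 2) + 1) := by
      rw [pow_succ]
      calc (4:ℝ) ^ n * q ^ (Ee n b + Ee n (b + 2))
          < q * q ^ (Ee n b + Ee n (b + 2)) :=
            mul_lt_mul_of_pos_right hq4 (pow_pos (by linarith) _)
        _ = q ^ (Ee n b + Ee n (b + 2)) * q := mul_comm _ _
    linarith
  set t : ℝ := P.coeff (b + 1) / P.coeff (b + 2) with ht
  have htpos : 0 < t := div_pos (hcpos _ (by omega)) (hcpos _ (by omega))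
  set F : Polynomial ℝ := (X - C t) * P with hF
  have hFmonic : F.Monic := (monic_X_sub_C t).mul (Pq_monic q n)
  have hFdeg : F.natDegree = a₀ + (b + 2) := by
    rw [hF, natDegree_mul (X_sub_C_ne_zero t) (Pq_monic q n).ne_zero,
      natDegree_X_sub_C, Pq_natDegree]
    omega
  have hFc : ∀ j, F.coeff (j + 1) = P.coeff j - t * P.coeff (j + 1) := by
    intro j
    have hFeq : F = P * X - C t * P := by rw [hF]; ring
    rw [hFeq, coeff_sub, coeff_mul_X, coeff_C_mul]
  have hFa₁ : F.coeff (b + 2) = 0 := by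
    rw [hFc (b + 1), ht, div_mul_cancel₀ _ (ne_of_gt (hcpos (b+2) (by omega))), sub_self]
  have hFa₁m : F.coeff (b + 1) < 0 := by
    rw [hFc b]
    have : P.coeff b < t * P.coeff (b + 1) := by
      rw [ht, div_mul_eq_mul_div, lt_div_iff₀ (hcpos (b+2) (by omega))]
      calc P.coeff b * P.coeff (b + 2) < P.coeff (b + 1) ^ 2 := hkey
        _ = P.coeff (b + 1) * P.coeff (b + 1) := sq _
    linarith
  -- define h
  set h : Polynomial ℝ := ∑ j ∈ Finset.range a₀, C (F.coeff (b + 2 + 1 + j)) * X ^ j with hh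
  have hhc : ∀ k, h.coeff k = if k < a₀ then F.coeff (b + 2 + 1 + k) else 0 := by
    intro k
    rw [hh, finset_sum_coeff]
    simp only [coeff_C_mul, coeff_X_pow, mul_ite, mul_one, mul_zero]
    rw [Finset.sum_ite_eq (Finset.range a₀) k fun j => F.coeff (b + 2 + 1 + j)]
    simp [Finset.mem_range]
  have hhtop : h.coeff (a₀ - 1) = 1 := by
    rw [hhc, if_pos (by omega), show b + 2 + 1 + (a₀ - 1) = a₀ + (b + 2) by omega,
      ← hFdeg]
    exact hFmonic.coeff_natDegree
  have hhdeg : h.natDegree = a₀ - 1 := by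
    apply le_antisymm
    · apply natDegree_le_iff_coeff_eq_zero.mpr
      intro m hm
      rw [hhc, if_neg (by omega)]
    · apply le_natDegree_of_ne_zero
      rw [hhtop]; norm_num
  have hhmonic : h.Monic := by
    rw [Monic, leadingCoeff, hhdeg, hhtop]
  -- define g
  set g : Polynomial ℝ := F - X ^ (b + 2 + 1) * h with hg
  have hgc : ∀ k, g.coeff k = F.coeff k -
      (if b + 2 + 1 ≤ k then h.coeff (k - (b + 2 + 1)) else 0) := by
    intro k
    rw [hg, coeff_sub, X_pow_mul, coeff_mul_X_pow']
  have hgdeg : g.natDegree = b + 1 := by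
    apply le_antisymm
    · apply natDegree_le_iff_coeff_eq_zero.mpr
      intro m hm
      rcases Nat.lt_or_ge m (b + 2 + 1) with hcase | hcase
      · have hm2 : m = b + 2 := by omega
        rw [hgc, if_neg (by omega), sub_zero, hm2, hFa₁]
      · rw [hgc, if_pos hcase, hhc]
        rcases Nat.lt_or_ge (m - (b + 2 + 1)) a₀ with hc2 | hc2
        · rw [if_pos hc2, show b + 2 + 1 + (m - (b + 2 + 1)) = m by omega, sub_self]
        · rw [if_neg (by omega), sub_zero]
          apply coeff_eq_zero_of_natDegree_lt
          rw [hFdeg]; omega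
    · apply le_natDegree_of_ne_zero
      rw [hgc, if_neg (by omega), sub_zero]
      exact ne_of_lt hFa₁m
  have hsum : g + X ^ ((b + 2) + 1) * h = F := by
    rw [hg]; ring
  refine ⟨g, h, hhmonic, hhdeg, by rw [hgdeg]; omega, ?_, ?_⟩
  · rw [hsum, hF, roots_mul (mul_ne_zero (X_sub_C_ne_zero t) (Pq_monic q n).ne_zero),
      roots_X_sub_C, Pq_roots]
    simp only [Multiset.card_add, Multiset.card_singleton, Multiset.card_map]
    have hcr : Multiset.card (Finset.range n).val = n := Finset.card_range n
    omega
  · rw [hsum, hF, roots_mul (mul_ne_zero (X_sub_C_ne_zero t) (Pq_monic q n).ne_zero),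
      roots_X_sub_C, Pq_roots, Multiset.singleton_add, Multiset.nodup_cons]
    constructor
    · intro hmem
      obtain ⟨i, _, hi⟩ := Multiset.mem_map.mp hmem
      have : (0:ℝ) < q ^ (i + 1) := pow_pos (by linarith) _
      linarith [hi ▸ htpos]
    · apply Multiset.Nodup.map _ (Finset.range n).nodup
      intro i j hij
      have hmono : StrictMono (fun m : ℕ => q ^ (m + 1)) := fun x y hxy =>
        pow_lt_pow_right₀ hq (by omega)
      have := neg_injective hij
      exact hmono.injective this
end

section
/- Let I = (G_1,...,G_n) ⊂ ℝ[X_1,...,X_n] with G_i = X_i^{a_i+1} + F_i, where 2 ≤ a_0 ≤ a_1 ≤ ⋯ ≤ a_n and deg F_i ≤ a_i − a_0. In the quotient A = ℝ[X_1,...,X_n]/I, with vector-space basis given by the residue classes of monomials X_1^{α_1}⋯X_n^{α_n}, 0 ≤ α_i ≤ a_i, the trace of the multiplication map by X_1^2 is zero. -/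
/-!
Write `b i = a i + 1`. Since `deg F i < b i`, rewriting `X i ^ b i ↦ -F i` strictly lowers the total
degree, so every monomial reduces to a combination of the reduced monomials `X^α`, `α i < b i`.
The leading terms `X i ^ b i` are pairwise coprime, so reducing a monomial divisible by
`X i ^ b i * X j ^ b j` first at `i` or first at `j` leads to the same normal form (both end at
`F i * F j * X^e₀`); hence the normal form vanishes on the ideal and the reduced monomials form a
basis of the quotient. For reduced `α`, the product `X₁ ^ 2 * X^α` is either reduced and different
from `X^α`, or its normal form is that of `-X^(α + 2e₁ - b₁e₁) * F₁`, of degree at most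
`|α| + 2 - (a₁ + 1) + (a₁ - a₀) < |α|` because `a₀ ≥ 2`. Either way the diagonal entry vanishes.
-/

open MvPolynomial

namespace PurePowerPerturbation

variable {R σ : Type*} [CommRing R]

theorem degree_tsub_single_add {d : σ →₀ ℕ} {i : σ} {k : ℕ} (h : k ≤ d i) :
    (d - Finsupp.single i k).degree + k = d.degree := by
  conv_rhs => rw [← tsub_add_cancel_of_le (Finsupp.single_le_iff.mpr h)]
  rw [map_add, Finsupp.degree_single]

theorem totalDegree_monomial_one_mul_le (e : σ →₀ ℕ) (p : MvPolynomial σ R) :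
    (monomial e 1 * p).totalDegree ≤ e.degree + p.totalDegree :=
  (totalDegree_mul _ _).trans (Nat.add_le_add_right (totalDegree_monomial_le _ _) _)

variable (b : σ → ℕ) (F : σ → MvPolynomial σ R)

noncomputable abbrev ideal : Ideal (MvPolynomial σ R) :=
  Ideal.span (Set.range fun i => X i ^ b i + F i)

variable {b F}

theorem degree_lt_of_mem_support (hF : ∀ i, (F i).totalDegree < b i) {e μ : σ →₀ ℕ} {i : σ}
    (hμ : μ ∈ (monomial e 1 * F i).support) : μ.degree < e.degree + b i :=
  (le_totalDegree hμ).trans_lt <|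
    (totalDegree_monomial_one_mul_le e (F i)).trans_lt (Nat.add_lt_add_left (hF i) _)

open Classical in
/-- The index reduced first is an arbitrary choice; `normalMonomial_add_single` shows that any
other choice gives the same result. -/
noncomputable def normalMonomial (hF : ∀ i, (F i).totalDegree < b i) (d : σ →₀ ℕ) :
    MvPolynomial σ R :=
  if h : ∃ i, b i ≤ d i then
    -∑ e ∈ (monomial (d - Finsupp.single h.choose (b h.choose)) 1 * F h.choose).support.attach,
      coeff e.1 (monomial (d - Finsupp.single h.choose (b h.choose)) 1 * F h.choose) •
        normalMonomial hF e.1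
  else monomial d 1
termination_by d.degree
decreasing_by
  exact degree_tsub_single_add h.choose_spec ▸ degree_lt_of_mem_support hF e.2

section NormalForm

variable (hF : ∀ i, (F i).totalDegree < b i)

noncomputable def normalForm : MvPolynomial σ R →ₗ[R] MvPolynomial σ R :=
  (basisMonomials σ R).constr R (normalMonomial hF)

theorem normalForm_monomial (d : σ →₀ ℕ) (r : R) :
    normalForm hF (monomial d r) = r • normalMonomial hF d := by
  have : monomial d r = r • basisMonomials σ R d := by
    rw [coe_basisMonomials, smul_monomial, smul_eq_mul, mul_one]
  rw [this, map_smul, normalForm, Module.Basis.constr_basis]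

theorem normalForm_apply (P : MvPolynomial σ R) :
    normalForm hF P = ∑ d ∈ P.support, coeff d P • normalMonomial hF d := by
  conv_lhs => rw [P.as_sum]
  simp only [map_sum, normalForm_monomial]

theorem normalMonomial_of_forall_lt {d : σ →₀ ℕ} (h : ∀ i, d i < b i) :
    normalMonomial hF d = monomial d 1 := by
  rw [normalMonomial, dif_neg (by simpa using h)]

theorem exists_normalMonomial_eq {d : σ →₀ ℕ} (h : ∃ i, b i ≤ d i) :
    ∃ i, b i ≤ d i ∧
      normalMonomial hF d = -normalForm hF (monomial (d - Finsupp.single i (b i)) 1 * F i) := by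
  refine ⟨h.choose, h.choose_spec, ?_⟩
  rw [normalMonomial, dif_pos h, normalForm_apply]
  exact congrArg Neg.neg (Finset.sum_attach _ fun e => coeff e _ • normalMonomial hF e)

theorem mem_support_normalMonomial {d e : σ →₀ ℕ} (he : e ∈ (normalMonomial hF d).support) :
    (∀ i, e i < b i) ∧ e.degree ≤ d.degree := by
  classical
  by_cases h : ∃ i, b i ≤ d i
  · obtain ⟨i, hi, hd⟩ := exists_normalMonomial_eq hF h
    rw [hd, support_neg, normalForm_apply] at he
    obtain ⟨μ, hμ, he⟩ := Finset.mem_biUnion.mp (support_sum he)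
    have hlt := degree_tsub_single_add hi ▸ degree_lt_of_mem_support hF hμ
    have ih := mem_support_normalMonomial (support_smul he)
    exact ⟨ih.1, ih.2.trans hlt.le⟩
  · simp only [not_exists, not_le] at h
    rw [normalMonomial_of_forall_lt hF h] at he
    rw [Finset.mem_singleton.mp (support_monomial_subset he)]
    exact ⟨h, le_rfl⟩
termination_by d.degree

theorem mem_support_normalForm {P : MvPolynomial σ R} {e : σ →₀ ℕ}
    (he : e ∈ (normalForm hF P).support) : (∀ i, e i < b i) ∧ e.degree ≤ P.totalDegree := by
  classical
  rw [normalForm_apply] at he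
  obtain ⟨d, hd, he⟩ := Finset.mem_biUnion.mp (support_sum he)
  have h := mem_support_normalMonomial hF (support_smul he)
  exact ⟨h.1, h.2.trans (le_totalDegree hd)⟩

theorem normalForm_sub_self_mem_of_forall {P : MvPolynomial σ R}
    (h : ∀ d ∈ P.support, normalMonomial hF d - monomial d 1 ∈ ideal b F) :
    normalForm hF P - P ∈ ideal b F := by
  have hP : normalForm hF P - P =
      ∑ d ∈ P.support, coeff d P • (normalMonomial hF d - monomial d 1) := by
    conv_lhs => rw [normalForm_apply]; enter [2]; rw [P.as_sum]
    simp only [smul_sub, Finset.sum_sub_distrib, smul_monomial, smul_eq_mul, mul_one]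
  rw [hP]
  exact Submodule.sum_mem _ fun d hd => Submodule.smul_of_tower_mem _ _ (h d hd)

theorem normalMonomial_sub_monomial_mem (d : σ →₀ ℕ) :
    normalMonomial hF d - monomial d 1 ∈ ideal b F := by
  by_cases h : ∃ i, b i ≤ d i
  · obtain ⟨i, hdi, hd⟩ := exists_normalMonomial_eq hF h
    set T := monomial (d - Finsupp.single i (b i)) 1 * F i
    have hT : normalForm hF T - T ∈ ideal b F := normalForm_sub_self_mem_of_forall hF fun μ hμ =>
      have := degree_tsub_single_add hdi ▸ degree_lt_of_mem_support hF hμ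
      normalMonomial_sub_monomial_mem μ
    have hgen : monomial d 1 + T ∈ ideal b F := by
      have : monomial d 1 + T = monomial (d - Finsupp.single i (b i)) 1 * (X i ^ b i + F i) := by
        rw [mul_add, X_pow_eq_monomial, monomial_mul, mul_one,
          tsub_add_cancel_of_le (Finsupp.single_le_iff.mpr hdi)]
      rw [this]
      exact Ideal.mul_mem_left _ _ (Ideal.subset_span ⟨i, rfl⟩)
    rw [hd]
    convert neg_mem (Ideal.add_mem _ hT hgen) using 1
    ring
  · simp only [not_exists, not_le] at h
    rw [normalMonomial_of_forall_lt hF h, sub_self]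
    exact zero_mem _
termination_by d.degree

theorem normalForm_sub_self_mem (P : MvPolynomial σ R) : normalForm hF P - P ∈ ideal b F :=
  normalForm_sub_self_mem_of_forall hF fun d _ => normalMonomial_sub_monomial_mem hF d

theorem normalForm_X_pow_mul {P : MvPolynomial σ R} {i : σ}
    (h : ∀ μ ∈ P.support,
      normalMonomial hF (μ + Finsupp.single i (b i)) = -normalForm hF (monomial μ 1 * F i)) :
    normalForm hF (X i ^ b i * P) = -normalForm hF (F i * P) := by
  conv_lhs => rw [P.as_sum, Finset.mul_sum, map_sum]
  conv_rhs => rw [P.as_sum, Finset.mul_sum, map_sum, ← Finset.sum_neg_distrib]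
  refine Finset.sum_congr rfl fun μ hμ => ?_
  have hF_mul : F i * monomial μ (coeff μ P) = coeff μ P • (monomial μ 1 * F i) := by
    rw [smul_eq_C_mul, ← mul_assoc, C_mul_monomial, mul_one, mul_comm]
  rw [X_pow_eq_monomial, monomial_mul, one_mul, normalForm_monomial, add_comm, h μ hμ, hF_mul,
    map_smul, smul_neg]

theorem normalMonomial_add_single (e : σ →₀ ℕ) (i : σ) :
    normalMonomial hF (e + Finsupp.single i (b i)) = -normalForm hF (monomial e 1 * F i) := by
  obtain ⟨j, hj, hd⟩ := exists_normalMonomial_eq hF (d := e + Finsupp.single i (b i)) ⟨i, by simp⟩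
  rw [hd]
  by_cases hji : j = i
  · rw [hji, add_tsub_cancel_right]
  have hej : b j ≤ e j := by simpa [Finsupp.single_apply, Ne.symm hji] using hj
  obtain ⟨e₀, rfl⟩ : ∃ e₀, e = e₀ + Finsupp.single j (b j) :=
    ⟨_, (tsub_add_cancel_of_le (Finsupp.single_le_iff.mpr hej)).symm⟩
  have hmul : ∀ k l, monomial (e₀ + Finsupp.single k (b k)) 1 * F l =
      X k ^ b k * (monomial e₀ 1 * F l) := fun k l => by
    rw [X_pow_eq_monomial, ← mul_assoc, monomial_mul, one_mul, add_comm]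
  rw [add_right_comm, add_tsub_cancel_right, hmul, hmul,
    normalForm_X_pow_mul hF fun μ hμ =>
      have := degree_lt_of_mem_support hF hμ
      normalMonomial_add_single μ i,
    normalForm_X_pow_mul hF fun μ hμ =>
      have := degree_lt_of_mem_support hF hμ
      normalMonomial_add_single μ j]
  congr 3
  ring
termination_by e.degree + b i
decreasing_by all_goals subst_vars; simp only [map_add, Finsupp.degree_single]; omega

theorem normalMonomial_of_le {d : σ →₀ ℕ} {i : σ} (h : b i ≤ d i) :
    normalMonomial hF d = -normalForm hF (monomial (d - Finsupp.single i (b i)) 1 * F i) := by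
  conv_lhs => rw [← tsub_add_cancel_of_le (Finsupp.single_le_iff.mpr h)]
  exact normalMonomial_add_single hF _ i

theorem normalForm_mul_generator (P : MvPolynomial σ R) (i : σ) :
    normalForm hF (P * (X i ^ b i + F i)) = 0 := by
  induction P using MvPolynomial.induction_on' with
  | monomial e r =>
    have hF_mul : monomial e r * F i = r • (monomial e 1 * F i) := by
      rw [smul_eq_C_mul, ← mul_assoc, C_mul_monomial, mul_one]
    rw [mul_add, X_pow_eq_monomial, monomial_mul, mul_one, hF_mul, map_add, map_smul,
      normalForm_monomial, normalMonomial_add_single, smul_neg, neg_add_cancel]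
  | add p q hp hq => rw [add_mul, map_add, hp, hq, add_zero]

theorem normalForm_eq_zero_of_mem {P : MvPolynomial σ R} (hP : P ∈ ideal b F) :
    normalForm hF P = 0 := by
  obtain ⟨c, rfl⟩ := Finsupp.mem_span_range_iff_exists_finsupp.mp hP
  rw [Finsupp.sum, map_sum]
  exact Finset.sum_eq_zero fun i _ => by rw [smul_eq_mul, normalForm_mul_generator]

theorem coeff_normalMonomial_single_add_self {j : σ} {k : ℕ} (hk : 0 < k)
    (hkF : (F j).totalDegree + k < b j) {v : σ →₀ ℕ} (hv : ∀ i, v i < b i) :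
    coeff v (normalMonomial hF (Finsupp.single j k + v)) = 0 := by
  classical
  by_cases hj : b j ≤ (Finsupp.single j k + v) j
  · rw [normalMonomial_of_le hF hj, coeff_neg, neg_eq_zero, ← notMem_support_iff]
    intro hv'
    have hdeg := (mem_support_normalForm hF hv').2.trans (totalDegree_monomial_one_mul_le _ (F j))
    have hsplit := degree_tsub_single_add hj
    rw [map_add, Finsupp.degree_single] at hsplit
    omega
  · have hred : ∀ i, (Finsupp.single j k + v) i < b i := fun i => by
      by_cases hij : i = j
      · subst hij; exact not_le.mp hj
      · simpa [Finsupp.single_apply, Ne.symm hij] using hv i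
    rw [normalMonomial_of_forall_lt hF hred, coeff_monomial, if_neg]
    intro h
    have := DFunLike.congr_fun h j
    rw [Finsupp.add_apply, Finsupp.single_eq_same] at this
    omega

end NormalForm

instance [Finite σ] (b : σ → ℕ) : Finite {d : σ →₀ ℕ // ∀ i, d i < b i} :=
  Finite.of_injective (fun d i => (⟨d.1 i, d.2 i⟩ : Fin (b i))) fun _ _ h =>
    Subtype.ext <| Finsupp.ext fun i => congrArg Fin.val (congrFun h i)

theorem mk_smul {A : Type*} [CommRing A] [Algebra R A] (I : Ideal A) (r : R) (x : A) :
    Ideal.Quotient.mk I (r • x) = r • Ideal.Quotient.mk I x :=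
  map_smul (Ideal.Quotient.mkₐ R I) r x

theorem sum_coeff_smul_monomial_of_forall_lt [Fintype {d : σ →₀ ℕ // ∀ i, d i < b i}]
    {Q : MvPolynomial σ R} (hQ : ∀ d ∈ Q.support, ∀ i, d i < b i) :
    ∑ w : {d : σ →₀ ℕ // ∀ i, d i < b i}, coeff w.1 Q • monomial w.1 1 = Q := by
  classical
  ext d
  simp only [coeff_sum, coeff_smul, coeff_monomial, smul_eq_mul, mul_ite, mul_one, mul_zero]
  by_cases hd : ∀ i, d i < b i
  · rw [Fintype.sum_eq_single ⟨d, hd⟩ fun w hw => if_neg fun h => hw (Subtype.ext h), if_pos rfl]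
  · rw [Finset.sum_eq_zero fun w _ => if_neg fun h : w.1 = d => hd (h ▸ w.2),
      notMem_support_iff.mp fun h => hd (hQ d h)]

theorem mk_normalForm (hF : ∀ i, (F i).totalDegree < b i) (P : MvPolynomial σ R) :
    Ideal.Quotient.mk (ideal b F) (normalForm hF P) = Ideal.Quotient.mk (ideal b F) P :=
  Ideal.Quotient.eq.mpr (normalForm_sub_self_mem hF P)

theorem linearIndependent_mk_monomial (hF : ∀ i, (F i).totalDegree < b i) :
    LinearIndependent R fun d : {d : σ →₀ ℕ // ∀ i, d i < b i} =>
      Ideal.Quotient.mk (ideal b F) (monomial d.1 (1 : R)) := by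
  classical
  rw [linearIndependent_iff']
  intro s g hg v hv
  set P := ∑ w ∈ s, g w • monomial w.1 (1 : R)
  have hPmem : P ∈ ideal b F := by
    rw [← Ideal.Quotient.eq_zero_iff_mem, ← hg, map_sum]
    exact Finset.sum_congr rfl fun w _ => mk_smul _ _ _
  have hP : P = 0 := by
    rw [← normalForm_eq_zero_of_mem hF hPmem, map_sum]
    exact Finset.sum_congr rfl fun w _ => by
      rw [map_smul, normalForm_monomial, normalMonomial_of_forall_lt hF w.2, one_smul]
  have := congrArg (coeff v.1) hP
  rwa [coeff_sum, Finset.sum_eq_single v, coeff_smul, coeff_monomial, if_pos rfl, smul_eq_mul,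
    mul_one, coeff_zero] at this
  · exact fun w _ hwv => by rw [coeff_smul, coeff_monomial, if_neg (fun h => hwv (Subtype.ext h)),
      smul_zero]
  · exact fun hvs => absurd hv hvs

theorem top_le_span_mk_monomial (hF : ∀ i, (F i).totalDegree < b i) :
    ⊤ ≤ Submodule.span R (Set.range fun d : {d : σ →₀ ℕ // ∀ i, d i < b i} =>
      Ideal.Quotient.mk (ideal b F) (monomial d.1 (1 : R))) := by
  rintro x -
  obtain ⟨P, rfl⟩ := Ideal.Quotient.mk_surjective x
  rw [← mk_normalForm hF P, (normalForm hF P).as_sum, map_sum]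
  refine Submodule.sum_mem _ fun e he => ?_
  rw [← mul_one (coeff e _), ← smul_eq_mul, ← smul_monomial, mk_smul]
  exact Submodule.smul_mem _ _
    (Submodule.subset_span ⟨⟨e, (mem_support_normalForm hF he).1⟩, rfl⟩)

noncomputable def basis (hF : ∀ i, (F i).totalDegree < b i) :
    Module.Basis {d : σ →₀ ℕ // ∀ i, d i < b i} R (MvPolynomial σ R ⧸ ideal b F) :=
  .mk (linearIndependent_mk_monomial hF) (top_le_span_mk_monomial hF)

theorem basis_apply (hF : ∀ i, (F i).totalDegree < b i) (v : {d : σ →₀ ℕ // ∀ i, d i < b i}) :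
    basis hF v = Ideal.Quotient.mk (ideal b F) (monomial v.1 1) :=
  Module.Basis.mk_apply _ _ _

theorem basis_repr_mk [Finite σ] (hF : ∀ i, (F i).totalDegree < b i) (P : MvPolynomial σ R)
    (v : {d : σ →₀ ℕ // ∀ i, d i < b i}) :
    (basis hF).repr (Ideal.Quotient.mk (ideal b F) P) v = coeff v.1 (normalForm hF P) := by
  have := Fintype.ofFinite {d : σ →₀ ℕ // ∀ i, d i < b i}
  conv_lhs => rw [← mk_normalForm hF P, ← sum_coeff_smul_monomial_of_forall_lt
    fun d hd => (mem_support_normalForm hF hd).1, map_sum]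
  simp only [mk_smul, ← basis_apply hF, Module.Basis.repr_sum_self]

theorem trace_mulLeft_X_pow_eq_zero [Finite σ] (hF : ∀ i, (F i).totalDegree < b i) {j : σ} {k : ℕ}
    (hk : 0 < k) (hkF : (F j).totalDegree + k < b j) :
    LinearMap.trace R (MvPolynomial σ R ⧸ ideal b F)
      (LinearMap.mulLeft R (Ideal.Quotient.mk (ideal b F) (X j ^ k))) = 0 := by
  classical
  have := Fintype.ofFinite {d : σ →₀ ℕ // ∀ i, d i < b i}
  rw [LinearMap.trace_eq_matrix_trace R (basis hF), Matrix.trace]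
  refine Finset.sum_eq_zero fun v _ => ?_
  rw [Matrix.diag_apply, LinearMap.toMatrix_apply, basis_apply, LinearMap.mulLeft_apply, ← map_mul,
    basis_repr_mk, X_pow_eq_monomial, monomial_mul, one_mul, normalForm_monomial, one_smul]
  exact coeff_normalMonomial_single_add_self hF hk hkF v.2

end PurePowerPerturbation

/-- Let `I = (G_1,…,G_n)` with `G_i = X_i^{a_i+1} + F_i`, where `2 ≤ a_0 ≤ ⋯ ≤ a_n`
and `deg F_i ≤ a_i − a_0`.  In `A = ℝ[X_1,…,X_n]/I`, the trace of the multiplication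
map by `X_1^2` is zero. -/
theorem stmt_16 (n : ℕ) (hn : 0 < n) (a : Fin (n + 1) → ℕ) (h0 : 2 ≤ a 0)
    (hmono : Monotone a) (F : Fin n → MvPolynomial (Fin n) ℝ)
    (hdeg : ∀ i : Fin n, (F i).totalDegree ≤ a i.succ - a 0) :
    LinearMap.trace ℝ
        (MvPolynomial (Fin n) ℝ ⧸
          Ideal.span (Set.range fun i : Fin n =>
            (X i : MvPolynomial (Fin n) ℝ) ^ (a i.succ + 1) + F i))
        (LinearMap.mulLeft ℝ
          (Ideal.Quotient.mk
            (Ideal.span (Set.range fun i : Fin n =>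
              (X i : MvPolynomial (Fin n) ℝ) ^ (a i.succ + 1) + F i))
            (X (⟨0, hn⟩ : Fin n) ^ 2))) = 0 := by
  have hF : ∀ i, (F i).totalDegree < a i.succ + 1 :=
    fun i => (hdeg i).trans_lt (Nat.lt_succ_of_le tsub_le_self)
  have hF₀ : (F ⟨0, hn⟩).totalDegree + 2 < a (Fin.succ ⟨0, hn⟩) + 1 := by
    have := hdeg ⟨0, hn⟩
    have := hmono (Fin.zero_le (Fin.succ ⟨0, hn⟩ : Fin (n + 1)))
    omega
  exact PurePowerPerturbation.trace_mulLeft_X_pow_eq_zero (b := fun i : Fin n => a i.succ + 1) hF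
    two_pos hF₀
end

section
/- Let M = x_0^{a_0} x_1^{a_1} with 0 < a_0 ≤ a_1. Then the real Waring rank of M equals a_0 + a_1, i.e. the degree of M. -/
open MvPolynomial

/-!
Put `d = a + b`. Comparing coefficients, `x ^ a * y ^ b = ∑ i, c i * (α i * x + β i * y) ^ d`
says that the moments `∑ i, c i * α i ^ k * β i ^ (d - k)` (`k ≤ d`) vanish except at `k = a`.
Grouping proportional forms turns this into real nodes `t = α / β` with weights `w` satisfying
`∑ t, w t * t ^ k = e * [k = a]` for `k ≤ D`, where `D = d`, or `D = d - 1` if some form is a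
multiple of `x`.

If there were fewer than `D` nodes, their nodal polynomial `g` would annihilate this moment
sequence, forcing `g_(a-1) = g_a = 0` while `deg g > a`. Two consecutive vanishing coefficients of
a real-rooted polynomial force all lower ones to vanish: if `g_p ≠ 0 = g_(p+1) = g_(p+2)` then
`deg g ≤ p`, which Rolle's theorem reduces to `p = 0`, where it follows from `2 g_0 g_2 < g_1 ^ 2`
for nonconstant real-rooted `g` with `g_0 ≠ 0`. Hence `X ^ 2 ∣ g`, impossible for distinct nodes.

Conversely, `d` distinct nodes whose nodal polynomial has no `X ^ a` term exist (`d - 1` negative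
nodes and one positive node that cancels that coefficient), and the `X ^ a`-coefficients of the
Lagrange basis are then weights with exactly the required moments up to degree `d`.
-/

open Finset

-- Inside `namespace Polynomial`, `X`, `C`, `coeff`, ... refer to univariate polynomials even
-- though `MvPolynomial` is open.
namespace Polynomial

open Lagrange

theorem Splits.derivative_of_real {f : ℝ[X]} (hf : f.Splits) : (derivative f).Splits := by
  rw [splits_iff_card_roots] at hf ⊢
  have := card_roots_le_derivative f
  have := card_roots' (derivative f)
  have := natDegree_derivative_le f
  omega

theorem Splits.two_mul_coeff_zero_mul_coeff_two_lt_coeff_one_sq {f : ℝ[X]} (hf : f.Splits)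
    (h0 : f.coeff 0 ≠ 0) (hdeg : 0 < f.natDegree) :
    2 * f.coeff 0 * f.coeff 2 < f.coeff 1 ^ 2 := by
  suffices h : ∀ g : ℝ[X], g.Splits → 0 ≤ g.coeff 1 ^ 2 - 2 * g.coeff 0 * g.coeff 2 ∧
      (g.coeff 0 ≠ 0 → 0 < g.natDegree → 0 < g.coeff 1 ^ 2 - 2 * g.coeff 0 * g.coeff 2) by
    linarith [(h f hf).2 h0 hdeg]
  intro g hg
  induction hg using Submonoid.closure_induction_left with
  | one => simp [coeff_one]
  | mul_left x hx g _ ih =>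
    obtain ⟨a, rfl⟩ | ⟨a, rfl⟩ := hx
    · have key : (C a * g).coeff 1 ^ 2 - 2 * (C a * g).coeff 0 * (C a * g).coeff 2 =
          a ^ 2 * (g.coeff 1 ^ 2 - 2 * g.coeff 0 * g.coeff 2) := by
        simp only [coeff_C_mul]; ring
      rw [key]
      refine ⟨mul_nonneg (sq_nonneg a) ih.1, fun h0 hdeg => ?_⟩
      rw [coeff_C_mul] at h0
      rw [natDegree_C_mul (left_ne_zero_of_mul h0)] at hdeg
      exact mul_pos (sq_pos_of_ne_zero (left_ne_zero_of_mul h0))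
        (ih.2 (right_ne_zero_of_mul h0) hdeg)
    · have key : ((X + C a) * g).coeff 1 ^ 2 -
            2 * ((X + C a) * g).coeff 0 * ((X + C a) * g).coeff 2 =
          g.coeff 0 ^ 2 + a ^ 2 * (g.coeff 1 ^ 2 - 2 * g.coeff 0 * g.coeff 2) := by
        simp only [add_mul, coeff_add, coeff_X_mul, coeff_C_mul, coeff_X_mul_zero]; ring
      rw [key]
      have hrest := mul_nonneg (sq_nonneg a) ih.1
      refine ⟨add_nonneg (sq_nonneg _) hrest, fun h0 _ => ?_⟩
      simp only [add_mul, coeff_add, coeff_C_mul, coeff_X_mul_zero, zero_add] at h0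
      linarith [sq_pos_of_ne_zero (right_ne_zero_of_mul h0)]

theorem Splits.natDegree_le_of_coeff_eq_zero {f : ℝ[X]} (hf : f.Splits) {p : ℕ}
    (hp : f.coeff p ≠ 0) (h₁ : f.coeff (p + 1) = 0) (h₂ : f.coeff (p + 2) = 0) :
    f.natDegree ≤ p := by
  induction p generalizing f with
  | zero =>
    by_contra! hdeg
    have := hf.two_mul_coeff_zero_mul_coeff_two_lt_coeff_one_sq hp hdeg
    simp_all
  | succ p ih =>
    have hf' := ih hf.derivative_of_real (by simp [coeff_derivative, hp]; positivity)
      (by simp [coeff_derivative, h₁]) (by simp [coeff_derivative, h₂])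
    rw [natDegree_le_iff_coeff_eq_zero] at hf' ⊢
    intro N hN
    obtain ⟨M, rfl⟩ : ∃ M, N = M + 1 := ⟨N - 1, by omega⟩
    have hM := hf' M (by omega)
    rw [coeff_derivative] at hM
    exact (mul_eq_zero.mp hM).resolve_right (by positivity)

theorem Splits.X_pow_dvd_of_coeff_eq_zero {f : ℝ[X]} (hf : f.Splits) {k : ℕ}
    (h₀ : f.coeff k = 0) (h₁ : f.coeff (k + 1) = 0) (hk : k + 1 < f.natDegree) :
    X ^ (k + 2) ∣ f := by
  induction k with
  | zero => exact X_pow_dvd_iff.mpr fun d hd => by interval_cases d <;> assumption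
  | succ k ih =>
    by_cases hk₀ : f.coeff k = 0
    · have := ih hk₀ h₀ (by omega)
      rw [X_pow_dvd_iff] at this ⊢
      intro i hi
      rcases Nat.lt_succ_iff_lt_or_eq.mp hi with hi | rfl
      exacts [this i hi, h₁]
    · exact absurd (hf.natDegree_le_of_coeff_eq_zero hk₀ h₀ h₁) (by omega)

theorem _root_.Lagrange.splits_nodal {R ι : Type*} [CommRing R] (s : Finset ι) (v : ι → R) :
    (nodal s v).Splits :=
  Splits.prod fun i _ => Splits.X_sub_C (v i)

theorem _root_.Lagrange.not_sq_X_sub_C_dvd_nodal {R : Type*} [CommRing R] [IsDomain R]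
    (s : Finset R) (x : R) : ¬ (X - C x) ^ 2 ∣ nodal s id := by
  classical
  have hroots : (nodal s id).roots = s.val := roots_multiset_prod_X_sub_C s.val
  rw [← le_rootMultiplicity_iff nodal_ne_zero, ← count_roots, hroots]
  have := Multiset.nodup_iff_count_le_one.mp s.nodup x
  omega

theorem _root_.Lagrange.sum_coeff_nodal_mul_sum_mul_pow {R ι : Type*} [CommRing R] [Nontrivial R]
    (s : Finset ι) (v w : ι → R) (j : ℕ) :
    ∑ k ∈ range (#s + 1), (nodal s v).coeff k * ∑ i ∈ s, w i * v i ^ (j + k) = 0 := by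
  have hterm : ∀ i ∈ s, w i * v i ^ j * (nodal s v).eval (v i) = 0 := fun i hi => by
    rw [eval_nodal_at_node hi, mul_zero]
  simp_rw [eval_eq_sum_range, natDegree_nodal, mul_sum] at hterm
  rw [← sum_eq_zero hterm, sum_comm]
  simp_rw [mul_sum]
  exact sum_congr rfl fun k _ => sum_congr rfl fun i _ => by ring

theorem _root_.Lagrange.coeff_nodal_eq_zero_of_sum_mul_pow_eq_ite {F : Type*} [Field F]
    (R : Finset F) (w : F → F) {a D : ℕ} {e : F} (he : e ≠ 0)
    (h : ∀ k ≤ D, ∑ t ∈ R, w t * t ^ k = if k = a then e else 0) {k : ℕ} (hka : k ≤ a)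
    (hkD : a - k + #R ≤ D) : (nodal R id).coeff k = 0 := by
  rcases lt_or_ge #R k with hk | hk
  · exact coeff_eq_zero_of_natDegree_lt (by rwa [natDegree_nodal])
  have := sum_coeff_nodal_mul_sum_mul_pow R id w (a - k)
  simp only [id] at this
  rw [sum_congr rfl fun k' hk' => by rw [h (a - k + k') (by rw [mem_range] at hk'; omega)],
    sum_eq_single k (fun k' _ hne => by rw [if_neg (by omega), mul_zero])
      (fun hk' => absurd (mem_range.mpr (by omega)) hk'), if_pos (by omega)] at this
  exact (mul_eq_zero.mp this).resolve_right he

theorem _root_.le_card_of_sum_mul_pow_eq_ite (R : Finset ℝ) (w : ℝ → ℝ) {a D : ℕ} {e : ℝ}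
    (he : e ≠ 0) (ha : 1 ≤ a) (haD : a ≤ D)
    (h : ∀ k ≤ D, ∑ t ∈ R, w t * t ^ k = if k = a then e else 0) :
    D ≤ #R := by
  by_contra! hR
  have hcoeff {k : ℕ} (hka : k ≤ a) (hkD : a - k + #R ≤ D) : (nodal R id).coeff k = 0 :=
    coeff_nodal_eq_zero_of_sum_mul_pow_eq_ite R w he h hka hkD
  have hdeg : a < #R := by
    by_contra! hRa
    have := hcoeff hRa (by omega)
    rw [← natDegree_nodal (v := id), ← leadingCoeff, nodal_monic.leadingCoeff] at this
    exact one_ne_zero this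
  have h₁ : (nodal R id).coeff (a - 1 + 1) = 0 := by
    rw [Nat.sub_add_cancel ha]; exact hcoeff le_rfl (by omega)
  have hdvd := (splits_nodal R id).X_pow_dvd_of_coeff_eq_zero
    (hcoeff (k := a - 1) (by omega) (by omega)) h₁ (by rw [natDegree_nodal]; omega)
  refine not_sq_X_sub_C_dvd_nodal R 0 ?_
  rw [C_0, sub_zero]
  exact (pow_dvd_pow X (by omega)).trans hdvd

theorem _root_.Lagrange.sum_eval_mul_coeff_basis {F ι : Type*} [Field F] [DecidableEq ι]
    {s : Finset ι} {v : ι → F} (hvs : Set.InjOn v s) {f : F[X]} (hf : f.degree < #s) (n : ℕ) :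
    ∑ i ∈ s, f.eval (v i) * (Lagrange.basis s v i).coeff n = f.coeff n := by
  conv_rhs => rw [eq_interpolate hvs hf]
  simp only [interpolate_apply, finsetSum_coeff, coeff_C_mul]

theorem _root_.exists_sum_mul_pow_eq_ite_of_coeff_nodal_eq_zero {F : Type*} [Field F]
    [DecidableEq F] (R : Finset F) {a : ℕ} (ha : a < #R) (h : (nodal R id).coeff a = 0) :
    ∃ w : F → F, ∀ k ≤ #R, ∑ t ∈ R, w t * t ^ k = if k = a then 1 else 0 := by
  refine ⟨fun t => (Lagrange.basis R id t).coeff a, fun k hk => ?_⟩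
  have hinj : Set.InjOn id (R : Set F) := Set.injOn_id _
  rcases hk.lt_or_eq with hk | rfl
  · have := sum_eval_mul_coeff_basis hinj (f := X ^ k)
      (by rw [degree_X_pow]; exact_mod_cast hk) a
    simp only [eval_pow, eval_X, id, coeff_X_pow] at this
    convert this using 1
    · exact sum_congr rfl fun t _ => mul_comm _ _
    · exact if_congr eq_comm rfl rfl
  · -- on the nodes `X ^ #R` agrees with `X ^ #R - nodal R id`, which has degree `< #R`
    have hdeg : (X ^ #R - nodal R id).degree < ↑(#R) := by
      have hX : (X ^ #R : F[X]).degree = #R := degree_X_pow _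
      rw [← hX]
      exact degree_sub_lt_left (by rw [hX, degree_nodal]) (pow_ne_zero _ X_ne_zero)
        (by rw [leadingCoeff_X_pow, nodal_monic.leadingCoeff])
    have := sum_eval_mul_coeff_basis hinj hdeg a
    simp only [eval_sub, eval_pow, eval_X, id, coeff_sub, coeff_X_pow, h] at this
    rw [if_neg ha.ne, sub_zero] at this
    rw [if_neg ha.ne', ← this]
    refine sum_congr rfl fun t ht => ?_
    have hnode : eval t (nodal R id) = 0 := eval_nodal_at_node (v := id) ht
    rw [hnode, sub_zero, mul_comm]

theorem _root_.exists_card_eq_coeff_nodal_eq_zero {a d : ℕ} (ha : 1 ≤ a) (had : a < d) :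
    ∃ R : Finset ℝ, #R = d ∧ (nodal R id).coeff a = 0 := by
  obtain ⟨a, rfl⟩ : ∃ a', a = a' + 1 := ⟨a - 1, by omega⟩
  set R₀ : Finset ℝ := (range (d - 1)).image fun i : ℕ => -((i : ℝ) + 1)
  have hinj : Function.Injective fun i : ℕ => -((i : ℝ) + 1) := fun i j hij => by simpa using hij
  have hR₀ : #R₀ = d - 1 := by rw [card_image_of_injective _ hinj, card_range]
  -- the nodes of `R₀` are negative, so all coefficients of `nodal R₀ id` are positive
  have hpos : ∀ k ≤ d - 1, 0 < (nodal R₀ id).coeff k := by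
    intro k hk
    have : nodal R₀ id = ∏ i ∈ range (d - 1), (X + C ((i : ℝ) + 1)) := by
      rw [nodal, prod_image fun i _ j _ hij => hinj hij]
      simp [sub_eq_add_neg]
    rw [this, Finset.prod_X_add_C_coeff _ _ (by rwa [card_range])]
    exact sum_pos (fun t _ => prod_pos fun i _ => by positivity)
      (powersetCard_nonempty.mpr (by simp))
  set τ := (nodal R₀ id).coeff a / (nodal R₀ id).coeff (a + 1)
  have hτ : τ ∉ R₀ := by
    have : 0 < τ := div_pos (hpos _ (by omega)) (hpos _ (by omega))
    simp only [R₀, mem_image, not_exists, not_and]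
    intro i _ hi
    linarith [i.cast_nonneg (α := ℝ)]
  refine ⟨insert τ R₀, by rw [card_insert_of_notMem hτ, hR₀]; omega, ?_⟩
  rw [nodal_insert_eq_nodal hτ, mul_comm, id, coeff_mul_X_sub_C, sub_eq_zero,
    mul_div_cancel₀ _ (hpos (a + 1) (by omega)).ne']

end Polynomial

theorem sum_mul_pow_mul_pow_eq_sum_image {K ι : Type*} [Field K] [DecidableEq K] (S : Finset ι)
    (c α β : ι → K) (hβ : ∀ i ∈ S, β i ≠ 0) {d k : ℕ} (hk : k ≤ d) :
    ∑ i ∈ S, c i * α i ^ k * β i ^ (d - k) =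
      ∑ t ∈ S.image (fun i => α i / β i), (∑ i ∈ S with α i / β i = t, c i * β i ^ d) * t ^ k := by
  refine (sum_image' _ fun i _ => ?_).symm
  rw [sum_mul]
  refine sum_congr rfl fun j hj => ?_
  rw [mem_filter] at hj
  obtain ⟨m, rfl⟩ := Nat.exists_eq_add_of_le hk
  rw [← hj.2, Nat.add_sub_cancel_left, div_pow, pow_add]
  field_simp [hβ j hj.1]

theorem add_le_card_of_sum_mul_pow_mul_pow_eq_ite {ι : Type*} [Fintype ι] (c α β : ι → ℝ)
    {a b : ℕ} {e : ℝ} (he : e ≠ 0) (ha : 1 ≤ a) (hb : 1 ≤ b)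
    (h : ∀ k ≤ a + b, ∑ i, c i * α i ^ k * β i ^ (a + b - k) = if k = a then e else 0) :
    a + b ≤ Fintype.card ι := by
  classical
  set I := univ.filter fun i => β i ≠ 0
  have hI : ∀ k ≤ a + b, ∑ i ∈ I, c i * α i ^ k * β i ^ (a + b - k) =
      ∑ t ∈ I.image (fun i => α i / β i),
        (∑ i ∈ I with α i / β i = t, c i * β i ^ (a + b)) * t ^ k :=
    fun k hk => sum_mul_pow_mul_pow_eq_sum_image I c α β (fun i hi => (mem_filter.mp hi).2) hk
  have hRI : #(I.image fun i => α i / β i) ≤ #I := card_image_le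
  by_cases hβ : ∀ i, β i ≠ 0
  · have hIu : I = univ := filter_true_of_mem fun i _ => hβ i
    have := le_card_of_sum_mul_pow_eq_ite _ _ he ha (D := a + b) (by omega) fun k hk => by
      rw [← hI k hk, hIu, h k hk]
    have hIcard : #I = Fintype.card ι := by rw [hIu, card_univ]
    omega
  · obtain ⟨i₀, hi₀⟩ := not_forall.mp hβ
    have hIlt : #I < #(univ : Finset ι) :=
      card_lt_card (filter_ssubset.mpr ⟨i₀, mem_univ _, hi₀⟩)
    -- a form proportional to `x` only contributes to the coefficient of `x ^ (a + b)`
    have := le_card_of_sum_mul_pow_eq_ite _ _ he ha (D := a + b - 1) (by omega) fun k hk => by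
      rw [← hI k (by omega), ← h k (by omega),
        ← sum_filter_add_sum_filter_not univ (β · ≠ 0),
        sum_eq_zero (s := univ.filter fun i => ¬β i ≠ 0) fun i hi => by
          rw [not_not.mp (mem_filter.mp hi).2, zero_pow (by omega), mul_zero], add_zero]
    rw [card_univ] at hIlt
    omega

theorem sum_C_mul_linear_pow {R ι : Type*} [CommSemiring R] (S : Finset ι) (c : ι → R)
    (L : ι → Fin 2 → R) (d : ℕ) :
    ∑ i ∈ S, C (c i) * (∑ j, C (L i j) * X j) ^ d =
      ∑ k ∈ range (d + 1), C (d.choose k * ∑ i ∈ S, c i * L i 0 ^ k * L i 1 ^ (d - k)) *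
        (X 0 ^ k * X 1 ^ (d - k) : MvPolynomial (Fin 2) R) := by
  simp only [Fin.sum_univ_two, add_pow, mul_sum, map_mul, map_sum, sum_mul]
  rw [sum_comm]
  refine sum_congr rfl fun k _ => sum_congr rfl fun i _ => ?_
  simp only [map_pow, map_natCast, mul_pow]
  ring

theorem sum_C_mul_X_pow_mul_X_pow_eq_iff {R : Type*} [CommSemiring R] {a b : ℕ} (v : ℕ → R) :
    ∑ k ∈ range (a + b + 1), C (v k) * (X 0 ^ k * X 1 ^ (a + b - k) : MvPolynomial (Fin 2) R) =
      X 0 ^ a * X 1 ^ b ↔ ∀ k ≤ a + b, v k = if k = a then 1 else 0 := by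
  constructor
  · intro h k hk
    have := congrArg (fun p => (aeval (R := R) ![(Polynomial.X : Polynomial R), 1] p).coeff k) h
    simpa [map_sum, Polynomial.finsetSum_coeff, Polynomial.coeff_X_pow, hk] using this
  · intro h
    rw [sum_congr rfl fun k hk => by rw [h k (Nat.lt_succ_iff.mp (mem_range.mp hk))]]
    simp

theorem X_pow_mul_X_pow_eq_sum_C_mul_linear_pow_iff {R ι : Type*} [CommSemiring R] {a b : ℕ}
    (S : Finset ι) (c : ι → R) (L : ι → Fin 2 → R) :
    X 0 ^ a * X 1 ^ b = ∑ i ∈ S, C (c i) * (∑ j, C (L i j) * X j) ^ (a + b) ↔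
      ∀ k ≤ a + b, (a + b).choose k * ∑ i ∈ S, c i * L i 0 ^ k * L i 1 ^ (a + b - k) =
        if k = a then 1 else 0 := by
  rw [eq_comm, sum_C_mul_linear_pow, sum_C_mul_X_pow_mul_X_pow_eq_iff]

theorem add_le_of_X_pow_mul_X_pow_eq_sum {a b s : ℕ} (ha : 1 ≤ a) (hb : 1 ≤ b) (c : Fin s → ℝ)
    (L : Fin s → Fin 2 → ℝ)
    (h : X 0 ^ a * X 1 ^ b = ∑ i, C (c i) * (∑ j, C (L i j) * X j) ^ (a + b)) :
    a + b ≤ s := by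
  rw [X_pow_mul_X_pow_eq_sum_C_mul_linear_pow_iff] at h
  simpa using add_le_card_of_sum_mul_pow_mul_pow_eq_ite c (L · 0) (L · 1)
    (e := ((a + b).choose a : ℝ)⁻¹)
    (inv_ne_zero (Nat.cast_ne_zero.mpr (Nat.choose_pos (by omega)).ne')) ha hb fun k hk => by
      have hC : ((a + b).choose k : ℝ) ≠ 0 := Nat.cast_ne_zero.mpr (Nat.choose_pos hk).ne'
      have := h k hk
      split_ifs at this ⊢ with hka
      · subst hka; exact eq_inv_of_mul_eq_one_right this
      · exact (mul_eq_zero.mp this).resolve_left hC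

theorem exists_X_pow_mul_X_pow_eq_sum {a b : ℕ} (ha : 1 ≤ a) (hb : 1 ≤ b) :
    ∃ (R : Finset ℝ) (c : ℝ → ℝ) (L : ℝ → Fin 2 → ℝ), #R = a + b ∧
      X 0 ^ a * X 1 ^ b = ∑ t ∈ R, C (c t) * (∑ j, C (L t j) * X j) ^ (a + b) := by
  obtain ⟨R, hR, hcoeff⟩ := exists_card_eq_coeff_nodal_eq_zero ha (show a < a + b by omega)
  obtain ⟨w, hw⟩ := exists_sum_mul_pow_eq_ite_of_coeff_nodal_eq_zero R (by omega) hcoeff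
  refine ⟨R, fun t => w t / (a + b).choose a, fun t => ![t, 1], hR, ?_⟩
  refine (X_pow_mul_X_pow_eq_sum_C_mul_linear_pow_iff _ _ _).mpr fun k hk => ?_
  simp only [Matrix.cons_val_zero, Matrix.cons_val_one, one_pow, mul_one, div_mul_eq_mul_div,
    ← sum_div, hw k (hR ▸ hk)]
  have : ((a + b).choose a : ℝ) ≠ 0 := Nat.cast_ne_zero.mpr (Nat.choose_pos (by omega)).ne'
  split_ifs with hka
  · subst hka; field_simp
  · simp

theorem waringRank_eq_card {K ι : Type*} [Field K] {n d : ℕ} {F : MvPolynomial (Fin n) K}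
    (S : Finset ι) (c : ι → K) (L : ι → Fin n → K)
    (hF : F = ∑ i ∈ S, C (c i) * (∑ j, C (L i j) * X j) ^ d)
    (hmin : ∀ s (c' : Fin s → K) (L' : Fin s → Fin n → K),
      F = ∑ i, C (c' i) * (∑ j, C (L' i j) * X j) ^ d → #S ≤ s) :
    waringRank K d F = #S := by
  have hS : #S ∈ {s | ∃ (c : Fin s → K) (L : Fin s → Fin n → K),
      F = ∑ i, C (c i) * (∑ j, C (L i j) * X j) ^ d} :=
    ⟨fun i => c (S.equivFin.symm i), fun i => L (S.equivFin.symm i), by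
      rw [hF, ← sum_coe_sort S, ← S.equivFin.symm.sum_comp]⟩
  exact le_antisymm (Nat.sInf_le hS) (le_csInf ⟨_, hS⟩ fun s ⟨c', L', h⟩ => hmin s c' L' h)

/-- The real Waring rank of the binary monomial `x_0^{a_0} x_1^{a_1}` with
`0 < a_0 ≤ a_1` is `a_0 + a_1`. -/
theorem stmt_17 (a₀ a₁ : ℕ) (h₀ : 0 < a₀) (h₁ : a₀ ≤ a₁) :
    waringRank ℝ (a₀ + a₁)
      ((X 0 : MvPolynomial (Fin 2) ℝ) ^ a₀ * (X 1 : MvPolynomial (Fin 2) ℝ) ^ a₁) =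
      a₀ + a₁ := by
  obtain ⟨R, c, L, hR, hF⟩ := exists_X_pow_mul_X_pow_eq_sum h₀ (h₀.trans_le h₁)
  refine (waringRank_eq_card R c L hF fun s c' L' h => ?_).trans hR
  exact hR ▸ add_le_of_X_pow_mul_X_pow_eq_sum h₀ (h₀.trans_le h₁) c' L' h
end

section
/- (Apolarity over ℝ for a set of distinct real points.) Let F ∈ ℝ[x_0,...,x_n] be homogeneous of degree d and let P_1, ..., P_r be points of ℝ^{n+1} \ {0} with corresponding linear forms L_1, ..., L_r. If the homogeneous ideal I_𝕏 of the reduced set of projective points 𝕏 = {[P_1],...,[P_r]} is contained in F^⊥, then F = Σ_{i=1}^r c_i L_i^d for some c_i ∈ ℝ; consequently rk_ℝ(F) ≤ r. -/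
/-!
The apolar pairing `⟨G, H⟩ = ∑_m m! G_m H_m` is a positive definite inner product on `ℝ[x]`;
for forms of the same degree it is the constant `G(∂) H`, and `⟨L_p^d, Q⟩ = d! Q(p)` for every
form `Q` of degree `d`. So if `Q` is orthogonal to every `L_{P_i}^d`, the degree-`d` part of `Q`
vanishes at the points, hence annihilates `F`, i.e. `Q` is orthogonal to `F`. Thus `F` lies in
the double orthogonal of the finite-dimensional span of the `L_{P_i}^d`, which is the span itself.
-/

open MvPolynomial

theorem Submodule.mem_span_range_of_inner_eq_zero {E : Type*} [AddCommGroup E] [Module ℝ E]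
    (c : InnerProductSpace.Core ℝ E) {ι : Type*} [Finite ι] {v : ι → E} {x : E}
    (h : ∀ y, (∀ i, c.inner (v i) y = 0) → c.inner x y = 0) :
    x ∈ Submodule.span ℝ (Set.range v) := by
  let _ : NormedAddCommGroup E := c.toNormedAddCommGroup
  let _ : InnerProductSpace ℝ E := InnerProductSpace.ofCore c.toCore
  set W := Submodule.span ℝ (Set.range v)
  have : FiniteDimensional ℝ W := FiniteDimensional.span_of_finite ℝ (Set.finite_range v)
  rw [← W.orthogonal_orthogonal, Submodule.mem_orthogonal]
  exact fun y hy => inner_eq_zero_symm.mp <| h y fun i => hy _ (Submodule.subset_span ⟨i, rfl⟩)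

namespace MvPolynomial

section ApolarPairing

variable {σ : Type*} [Fintype σ]

noncomputable def factorialWeight (m : σ →₀ ℕ) : ℝ := ∏ i, ((m i).factorial : ℝ)

lemma factorialWeight_pos (m : σ →₀ ℕ) : 0 < factorialWeight m :=
  Finset.prod_pos fun i _ => mod_cast Nat.factorial_pos (m i)

noncomputable def apolarPairing (G H : MvPolynomial σ ℝ) : ℝ :=
  ∑ m ∈ H.support, factorialWeight m * G.coeff m * H.coeff m

lemma apolarPairing_eq_sum (G H : MvPolynomial σ ℝ) {s : Finset (σ →₀ ℕ)}
    (hs : H.support ⊆ s) :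
    apolarPairing G H = ∑ m ∈ s, factorialWeight m * G.coeff m * H.coeff m :=
  Finset.sum_subset hs fun m _ hm => by rw [notMem_support_iff.mp hm, mul_zero]

lemma apolarPairing_comm (G H : MvPolynomial σ ℝ) : apolarPairing G H = apolarPairing H G := by
  rw [apolarPairing_eq_sum G H Finset.subset_union_right,
    apolarPairing_eq_sum H G Finset.subset_union_left]
  exact Finset.sum_congr rfl fun m _ => by ring

lemma apolarPairing_add_left (G₁ G₂ H : MvPolynomial σ ℝ) :
    apolarPairing (G₁ + G₂) H = apolarPairing G₁ H + apolarPairing G₂ H := by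
  rw [apolarPairing, apolarPairing, apolarPairing, ← Finset.sum_add_distrib]
  exact Finset.sum_congr rfl fun m _ => by rw [coeff_add]; ring

lemma apolarPairing_smul_left (r : ℝ) (G H : MvPolynomial σ ℝ) :
    apolarPairing (r • G) H = r * apolarPairing G H := by
  rw [apolarPairing, apolarPairing, Finset.mul_sum]
  exact Finset.sum_congr rfl fun m _ => by rw [coeff_smul, smul_eq_mul]; ring

lemma apolarPairing_self_term_nonneg (G : MvPolynomial σ ℝ) (m : σ →₀ ℕ) :
    0 ≤ factorialWeight m * G.coeff m * G.coeff m := by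
  rw [mul_assoc]
  exact mul_nonneg (factorialWeight_pos m).le (mul_self_nonneg _)

lemma eq_zero_of_apolarPairing_self_eq_zero {G : MvPolynomial σ ℝ} (h : apolarPairing G G = 0) :
    G = 0 := by
  ext m
  by_contra hm
  rw [coeff_zero] at hm
  have hterm := (Finset.sum_eq_zero_iff_of_nonneg fun m _ =>
    apolarPairing_self_term_nonneg G m).mp h m (mem_support_iff.mpr hm)
  simp [(factorialWeight_pos m).ne', hm] at hterm

noncomputable abbrev apolarInnerProductCore : InnerProductSpace.Core ℝ (MvPolynomial σ ℝ) where
  inner := apolarPairing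
  conj_inner_symm G H := apolarPairing_comm H G
  re_inner_nonneg G := Finset.sum_nonneg fun m _ => apolarPairing_self_term_nonneg G m
  add_left := apolarPairing_add_left
  smul_left G H r := apolarPairing_smul_left r G H
  definite _ := eq_zero_of_apolarPairing_self_eq_zero

end ApolarPairing

end MvPolynomial

lemma Finsupp.eq_of_le_of_degree_eq {σ : Type*} {b m : σ →₀ ℕ} (hle : b ≤ m)
    (h : b.degree = m.degree) : b = m := by
  obtain ⟨c, rfl⟩ := exists_add_of_le hle
  rw [map_add, left_eq_add, Finsupp.degree_eq_zero_iff] at h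
  rw [h, add_zero]

namespace MvPolynomial

lemma IsHomogeneous.degree_eq_of_mem_support {σ R : Type*} [CommSemiring R]
    {φ : MvPolynomial σ R} {n : ℕ} (hφ : φ.IsHomogeneous n) {s : σ →₀ ℕ} (hs : s ∈ φ.support) :
    s.degree = n :=
  (hφ.degree_eq_sum_deg_support hs).symm

lemma pderiv_pow_monomial {σ R : Type*} [CommSemiring R] (i : σ) (k : ℕ) (m : σ →₀ ℕ) (c : R) :
    (((pderiv i).toLinearMap : Module.End R (MvPolynomial σ R)) ^ k) (monomial m c) =
      monomial (m - Finsupp.single i k) (c * (m i).descFactorial k) := by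
  induction k generalizing m c with
  | zero => simp
  | succ k ih =>
    rw [pow_succ, Module.End.mul_apply, Derivation.coeFn_coe, pderiv_monomial, ih]
    cases h : m i with
    | zero => simp [h]
    | succ s =>
      have hsub : (m - Finsupp.single i 1 : σ →₀ ℕ) i = s := by simp [h]
      rw [hsub, tsub_tsub, ← Finsupp.single_add, add_comm 1 k, Nat.succ_descFactorial_succ,
        Nat.cast_mul, Nat.cast_succ]
      ring_nf

lemma list_prod_pderiv_pow_monomial {σ R : Type*} [CommSemiring R] [DecidableEq σ]
    (b : σ →₀ ℕ) {l : List σ} (hl : l.Nodup) (m : σ →₀ ℕ) (c : R) :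
    ((l.map fun i =>
        ((pderiv i).toLinearMap : Module.End R (MvPolynomial σ R)) ^ b i).prod) (monomial m c) =
      monomial (m - ∑ i ∈ l.toFinset, Finsupp.single i (b i))
        (c * ∏ i ∈ l.toFinset, ((m i).descFactorial (b i) : R)) := by
  induction l with
  | nil => simp
  | cons i t ih =>
    obtain ⟨hit, ht⟩ := List.nodup_cons.mp hl
    have hit' : i ∉ t.toFinset := by simpa using hit
    have hmi : (m - ∑ j ∈ t.toFinset, Finsupp.single j (b j)) i = m i := by
      simp [Finsupp.single_apply, hit']
    rw [List.map_cons, List.prod_cons, Module.End.mul_apply, ih ht, pderiv_pow_monomial, hmi,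
      List.toFinset_cons, Finset.sum_insert hit', Finset.prod_insert hit', tsub_tsub,
      add_comm (Finsupp.single i (b i))]
    ring_nf

lemma diffOp_eq_apply {N : ℕ} (Q F : MvPolynomial (Fin N) ℝ) :
    diffOp Q F = (∑ b ∈ Q.support, Q.coeff b • (List.ofFn fun i : Fin N =>
      ((pderiv i).toLinearMap : Module.End ℝ (MvPolynomial (Fin N) ℝ)) ^ b i).prod) F := by
  simp [diffOp, LinearMap.sum_apply]

lemma diffOp_monomial {N : ℕ} (Q : MvPolynomial (Fin N) ℝ) (m : Fin N →₀ ℕ) (c : ℝ) :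
    diffOp Q (monomial m c) =
      ∑ b ∈ Q.support, Q.coeff b • monomial (m - b) (c * ∏ i, ((m i).descFactorial (b i) : ℝ)) := by
  refine Finset.sum_congr rfl fun b _ => ?_
  rw [List.ofFn_eq_map, list_prod_pderiv_pow_monomial b (List.nodup_finRange N),
    List.toFinset_finRange, Finsupp.univ_sum_single]

lemma diffOp_eq_C_apolarPairing {N d : ℕ} {Q F : MvPolynomial (Fin N) ℝ}
    (hQ : Q.IsHomogeneous d) (hF : F.IsHomogeneous d) :
    diffOp Q F = C (apolarPairing Q F) := by
  conv_lhs => rw [← support_sum_monomial_coeff F]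
  rw [diffOp_eq_apply, map_sum, apolarPairing, map_sum]
  refine Finset.sum_congr rfl fun m hm => ?_
  rw [← diffOp_eq_apply, diffOp_monomial, Finset.sum_eq_single m]
  · simp only [tsub_self, Nat.descFactorial_self, monomial_zero', smul_eq_C_mul, ← C_mul,
      factorialWeight]
    ring_nf
  · intro b hb hbm
    -- `b ≠ m` have the same degree, so `b i > m i` for some `i` and `∂^b` kills `x^m`.
    obtain ⟨i, hi⟩ : ∃ i, m i < b i := by
      by_contra! hle
      exact hbm (Finsupp.eq_of_le_of_degree_eq hle
        ((hQ.degree_eq_of_mem_support hb).trans (hF.degree_eq_of_mem_support hm).symm))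
    rw [Finset.prod_eq_zero (Finset.mem_univ i) (by simp [Nat.descFactorial_eq_zero_iff_lt.mpr hi]),
      mul_zero, monomial_zero, smul_zero]
  · intro hm'
    rw [notMem_support_iff.mp hm', zero_smul]

section LinearFormPower

variable {σ : Type*} [Fintype σ]

lemma coeff_linearForm_pow (p : σ → ℝ) {d : ℕ} {m : σ →₀ ℕ} (hm : m.degree = d) :
    coeff m ((∑ j, C (p j) * X j) ^ d) = Nat.multinomial Finset.univ m * ∏ j, p j ^ m j := by
  classical
  have hterm : ∀ k : σ → ℕ,
      (Nat.multinomial Finset.univ k * ∏ j, (C (p j) * X j) ^ k j : MvPolynomial σ ℝ) =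
        monomial (Finsupp.equivFunOnFinite.symm k)
          (Nat.multinomial Finset.univ k * ∏ j, p j ^ k j) := by
    intro k
    simp_rw [mul_pow, ← map_pow, X_pow_eq_monomial, Finset.prod_mul_distrib, ← map_prod,
      ← monomial_sum_index, ← Finsupp.equivFunOnFinite_symm_eq_sum, ← C_eq_coe_nat,
      C_mul_monomial]
  rw [Finset.sum_pow_eq_sum_piAntidiag, coeff_sum, Finset.sum_congr rfl fun k _ =>
    congrArg (coeff m) (hterm k), Finset.sum_eq_single (⇑m : σ → ℕ)]
  · rw [coeff_monomial, if_pos (Finsupp.equivFunOnFinite_symm_coe m)]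
  · intro k _ hkm
    rw [coeff_monomial, if_neg fun h => hkm (by rwa [Equiv.symm_apply_eq] at h)]
  · intro hmem
    exact absurd (Finset.mem_piAntidiag.mpr ⟨by rw [← hm, Finsupp.degree_eq_sum],
      fun i _ => Finset.mem_univ i⟩) hmem

/-- The weights `m!` cancel the multinomial coefficients of `L_p^d`. -/
lemma apolarPairing_linearForm_pow (p : σ → ℝ) {d : ℕ} {Q : MvPolynomial σ ℝ}
    (hQ : Q.IsHomogeneous d) :
    apolarPairing ((∑ j, C (p j) * X j) ^ d) Q = d.factorial * eval p Q := by
  rw [apolarPairing, eval_eq', Finset.mul_sum]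
  refine Finset.sum_congr rfl fun m hm => ?_
  have hmd := hQ.degree_eq_of_mem_support hm
  have hweight : factorialWeight m * Nat.multinomial Finset.univ m = (d.factorial : ℝ) := by
    rw [factorialWeight, ← Nat.cast_prod, ← Nat.cast_mul, Nat.multinomial_spec,
      ← Finsupp.degree_eq_sum, hmd]
  rw [coeff_linearForm_pow p hmd, ← hweight]
  ring

end LinearFormPower

lemma apolarPairing_homogeneousComponent {σ : Type*} [Fintype σ] {d : ℕ}
    {H : MvPolynomial σ ℝ} (hH : H.IsHomogeneous d) (Q : MvPolynomial σ ℝ) :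
    apolarPairing (homogeneousComponent d Q) H = apolarPairing Q H :=
  Finset.sum_congr rfl fun m hm => by
    rw [coeff_homogeneousComponent, if_pos (hH.degree_eq_of_mem_support hm)]

lemma isHomogeneous_linearForm_pow {σ R : Type*} [Fintype σ] [CommSemiring R] (p : σ → R)
    (d : ℕ) : ((∑ j, C (p j) * X j) ^ d : MvPolynomial σ R).IsHomogeneous d := by
  simpa using (IsHomogeneous.sum _ _ 1 fun j _ => isHomogeneous_C_mul_X (p j) j).pow d

end MvPolynomial

theorem stmt_18_general (n d r : ℕ) (F : MvPolynomial (Fin (n + 1)) ℝ) (hF : F.IsHomogeneous d)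
    (P : Fin r → Fin (n + 1) → ℝ)
    (hapolar : ∀ Q : MvPolynomial (Fin (n + 1)) ℝ, (∃ m, Q.IsHomogeneous m) →
      (∀ i, eval (P i) Q = 0) → diffOp Q F = 0) :
    (∃ c : Fin r → ℝ, F = ∑ i, C (c i) * (∑ j, C (P i j) * X j) ^ d) ∧
      waringRank ℝ d F ≤ r := by
  have hspan : F ∈ Submodule.span ℝ (Set.range fun i => (∑ j, C (P i j) * X j) ^ d) := by
    refine Submodule.mem_span_range_of_inner_eq_zero apolarInnerProductCore fun Q hQ => ?_
    set Qd := homogeneousComponent d Q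
    have hQd : Qd.IsHomogeneous d := homogeneousComponent_isHomogeneous d Q
    have hvanish : ∀ i, eval (P i) Qd = 0 := fun i => by
      have h := apolarPairing_linearForm_pow (P i) hQd
      rw [apolarPairing_comm, apolarPairing_homogeneousComponent (isHomogeneous_linearForm_pow _ d),
        apolarPairing_comm] at h
      exact (mul_eq_zero.mp (h.symm.trans (hQ i))).resolve_left (by positivity)
    have hF_Qd := hapolar Qd ⟨d, hQd⟩ hvanish
    rwa [diffOp_eq_C_apolarPairing hQd hF, C_eq_zero, apolarPairing_homogeneousComponent hF,
      apolarPairing_comm] at hF_Qd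
  obtain ⟨c, hc⟩ := (Submodule.mem_span_range_iff_exists_fun ℝ).mp hspan
  have hFeq : F = ∑ i, C (c i) * (∑ j, C (P i j) * X j) ^ d := by
    simp_rw [← hc, smul_eq_C_mul]
  exact ⟨⟨c, hFeq⟩, Nat.sInf_le ⟨c, P, hFeq⟩⟩

/-- Real apolarity lemma for a set of distinct real points: if every form vanishing at
the points `P_1,…,P_r` annihilates the degree-`d` form `F`, then `F = ∑ c_i L_i^d`
with `L_i` the linear forms associated to the `P_i`; consequently `rk_ℝ(F) ≤ r`. -/
theorem stmt_18 (n d r : ℕ) (F : MvPolynomial (Fin (n + 1)) ℝ) (hF : F.IsHomogeneous d)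
    (P : Fin r → Fin (n + 1) → ℝ) (hP : ∀ i, P i ≠ 0)
    (hapolar : ∀ Q : MvPolynomial (Fin (n + 1)) ℝ, (∃ m, Q.IsHomogeneous m) →
      (∀ i, eval (P i) Q = 0) → diffOp Q F = 0) :
    (∃ c : Fin r → ℝ, F = ∑ i, C (c i) * (∑ j, C (P i j) * X j) ^ d) ∧
      waringRank ℝ d F ≤ r :=
  stmt_18_general n d r F hF P hapolar
end
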